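/- arXiv:2308.01122 — 6 statements merged into one kernel-verified Lean document; each statement's English description precedes it below -/
import Mathlib

section
/- Let N ≥ 2 and let p_1, …, p_N ∈ (1, ∞) be exponents whose harmonic mean p̄ (defined by 1/p̄ = (1/N)·Σ_{i=1}^N 1/p_i) satisfies p̄ < N, and set p̄* = N·p̄/(N − p̄). Then there exists a constant C > 0, depending only on N and p_1, …, p_N, such that for every smooth compactly supported function u : ℝ^N → ℝ one has ‖u‖_{L^{p̄*}(ℝ^N)} ≤ C · ∏_{i=1}^N ‖∂u/∂x_i‖_{L^{p_i}(ℝ^N)}^{1/N} (Troisi's anisotropic Sobolev inequality). -/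
noncomputable section TroisiAuxSection

set_option linter.unusedSectionVars false
set_option maxHeartbeats 1000000

open scoped ENNReal
open Set Function Finset MeasureTheory Measure


variable {ι : Type*} [Fintype ι] [DecidableEq ι] {A : ι → Type*} [∀ i, MeasurableSpace (A i)]
  (μ : ∀ i, Measure (A i)) [∀ i, SigmaFinite (μ i)]

/-- Hölder for two disjoint products with a common constant exponent. -/
lemma holder_two_prods {α : Type*} [MeasurableSpace α] {ν : Measure α}
    (s t : Finset ι) (hst : Disjoint s t) {f g : ι → α → ℝ≥0∞}
    (hf : ∀ i ∈ s, AEMeasurable (f i) ν) (hg : ∀ i ∈ t, AEMeasurable (g i) ν)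
    {κ : ℝ} (hκ : 0 ≤ κ) (hsum : ((s.card : ℝ) + t.card) * κ = 1) :
    ∫⁻ a, (∏ i ∈ s, f i a ^ κ) * ∏ i ∈ t, g i a ^ κ ∂ν ≤
      (∏ i ∈ s, (∫⁻ a, f i a ∂ν) ^ κ) * ∏ i ∈ t, (∫⁻ a, g i a ∂ν) ^ κ := by
  classical
  set h : ι → α → ℝ≥0∞ := fun i => if i ∈ s then f i else g i with hh
  have hfs : ∀ i ∈ s, h i = f i := fun i hi => by simp [hh, hi]
  have hgt : ∀ i ∈ t, h i = g i := fun i hi => by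
    have : i ∉ s := fun hs => (Finset.disjoint_left.1 hst) hs hi
    simp [hh, this]
  have key := ENNReal.lintegral_prod_norm_pow_le (μ := ν) (s ∪ t)
    (f := h) (p := fun _ => κ) ?_ ?_ (fun _ _ => hκ)
  · calc ∫⁻ a, (∏ i ∈ s, f i a ^ κ) * ∏ i ∈ t, g i a ^ κ ∂ν
        = ∫⁻ a, ∏ i ∈ s ∪ t, h i a ^ κ ∂ν := by
          congr 1; ext a
          rw [Finset.prod_union hst]
          congr 1
          · exact Finset.prod_congr rfl fun i hi => by rw [hfs i hi]
          · exact Finset.prod_congr rfl fun i hi => by rw [hgt i hi]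
      _ ≤ ∏ i ∈ s ∪ t, (∫⁻ a, h i a ∂ν) ^ κ := key
      _ = _ := by
          rw [Finset.prod_union hst]
          congr 1
          · exact Finset.prod_congr rfl fun i hi => by rw [hfs i hi]
          · exact Finset.prod_congr rfl fun i hi => by rw [hgt i hi]
  · intro i hi
    rcases Finset.mem_union.1 hi with hi | hi
    · rw [hfs i hi]; exact hf i hi
    · rw [hgt i hi]; exact hg i hi
  · rw [Finset.sum_const, nsmul_eq_mul, Finset.card_union_of_disjoint hst]
    push_cast
    exact hsum

/-- The inductive step statement for Loomis–Whitney. -/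
lemma lw_aux (hι : 2 ≤ Fintype.card ι)
    (f : ι → (∀ i, A i) → ℝ≥0∞) (hf : ∀ i, Measurable (f i)) (s : Finset ι) :
    ∀ x : ∀ i, A i,
      (∫⋯∫⁻_s, (fun y => ∏ i, ((∫⋯∫⁻_{i}, f i ∂μ) y) ^ ((Fintype.card ι - 1 : ℝ))⁻¹) ∂μ) x ≤
      (∏ i ∈ s, ((∫⋯∫⁻_s, f i ∂μ) x) ^ ((Fintype.card ι - 1 : ℝ))⁻¹) *
        ∏ i ∈ sᶜ, ((∫⋯∫⁻_(insert i s), f i ∂μ) x) ^ ((Fintype.card ι - 1 : ℝ))⁻¹ := by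
  classical
  set κ : ℝ := ((Fintype.card ι - 1 : ℝ))⁻¹ with hκdef
  have hNR : (1 : ℝ) ≤ (Fintype.card ι - 1 : ℝ) := by
    have : (2 : ℝ) ≤ Fintype.card ι := by exact_mod_cast hι
    linarith
  have hκ0 : 0 ≤ κ := by positivity
  have hG : Measurable (fun y => ∏ i, ((∫⋯∫⁻_{i}, f i ∂μ) y) ^ κ) := by
    refine Finset.measurable_prod _ fun i _ => ?_
    exact ((hf i).lmarginal μ).pow_const _
  induction s using Finset.induction with
  | empty =>
    intro x
    simp only [lmarginal_empty, Finset.prod_empty, one_mul, Finset.compl_empty]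
    apply le_of_eq
    exact Finset.prod_congr rfl fun i _ => rfl
  | @insert j s' hj ih =>
    intro x
    have hmeas : ∀ i : ι, ∀ (st : Finset ι), Measurable fun t => (∫⋯∫⁻_st, f i ∂μ) (update x j t) :=
      fun i st => ((hf i).lmarginal μ).comp (measurable_update x)
    rw [lmarginal_insert _ hG hj]
    calc ∫⁻ t, (∫⋯∫⁻_s', (fun y => ∏ i, ((∫⋯∫⁻_{i}, f i ∂μ) y) ^ κ) ∂μ) (update x j t) ∂μ j
        ≤ ∫⁻ t, (∏ i ∈ s', ((∫⋯∫⁻_s', f i ∂μ) (update x j t)) ^ κ) *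
            ∏ i ∈ s'ᶜ, ((∫⋯∫⁻_(insert i s'), f i ∂μ) (update x j t)) ^ κ ∂μ j := by
          exact lintegral_mono fun t => ih (update x j t)
      _ = ((∫⋯∫⁻_(insert j s'), f j ∂μ) x) ^ κ *
            ∫⁻ t, (∏ i ∈ s', ((∫⋯∫⁻_s', f i ∂μ) (update x j t)) ^ κ) *
              ∏ i ∈ (insert j s')ᶜ, ((∫⋯∫⁻_(insert i s'), f i ∂μ) (update x j t)) ^ κ ∂μ j := by
          rw [← lintegral_const_mul]
          · congr 1; ext t
            have hjc : j ∈ s'ᶜ := by simpa using hj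
            rw [← Finset.insert_erase hjc, Finset.prod_insert (Finset.notMem_erase _ _)]
            have herase : s'ᶜ.erase j = (insert j s')ᶜ := by
              ext i; simp [and_comm]
            rw [herase]
            have hupd : (∫⋯∫⁻_(insert j s'), f j ∂μ) (update x j t) =
                (∫⋯∫⁻_(insert j s'), f j ∂μ) x :=
              lmarginal_update_of_mem μ (Finset.mem_insert_self j s') (f j) x t
            rw [hupd]; ring
          · exact (Finset.measurable_prod _ fun i _ => (hmeas i s').pow_const _).mul
              (Finset.measurable_prod _ fun i _ => (hmeas i (insert i s')).pow_const _)
      _ ≤ ((∫⋯∫⁻_(insert j s'), f j ∂μ) x) ^ κ *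
            ((∏ i ∈ s', (∫⁻ t, (∫⋯∫⁻_s', f i ∂μ) (update x j t) ∂μ j) ^ κ) *
              ∏ i ∈ (insert j s')ᶜ, (∫⁻ t, (∫⋯∫⁻_(insert i s'), f i ∂μ) (update x j t) ∂μ j) ^ κ) := by
          gcongr
          refine holder_two_prods s' (insert j s')ᶜ ?_ ?_ ?_ hκ0 ?_
          · exact Finset.disjoint_left.2 fun i hi h2 =>
              (Finset.mem_compl.1 h2) (Finset.mem_insert_of_mem hi)
          · exact fun i _ => (hmeas i s').aemeasurable
          · exact fun i _ => (hmeas i (insert i s')).aemeasurable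
          · rw [Finset.card_compl, Finset.card_insert_of_notMem hj]
            have h1 : s'.card + 1 ≤ Fintype.card ι := Finset.card_le_univ (insert j s') |>.trans_eq (by simp) |>.trans_eq' (by rw [Finset.card_insert_of_notMem hj])
            have hne : (Fintype.card ι : ℝ) - 1 ≠ 0 := by linarith
            rw [hκdef, mul_inv_eq_one₀ hne]
            push_cast [Nat.cast_sub (by omega : s'.card + 1 ≤ Fintype.card ι)]
            ring
      _ = _ := by
          have e1 : ∀ i, ∫⁻ t, (∫⋯∫⁻_s', f i ∂μ) (update x j t) ∂μ j =
              (∫⋯∫⁻_(insert j s'), f i ∂μ) x := fun i => (lmarginal_insert _ (hf i) hj x).symm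
          have e2 : ∀ i ∈ (insert j s')ᶜ, ∫⁻ t, (∫⋯∫⁻_(insert i s'), f i ∂μ) (update x j t) ∂μ j =
              (∫⋯∫⁻_(insert i (insert j s')), f i ∂μ) x := by
            intro i hi
            have hij : i ≠ j := by
              intro h; subst h; exact absurd (Finset.mem_insert_self i s') (by simpa using hi)
            have hji : j ∉ insert i s' := by
              simp only [Finset.mem_insert]
              push_neg
              exact ⟨hij.symm, hj⟩
            rw [← lmarginal_insert _ (hf i) hji x, Finset.insert_comm]
          have h1 : (∏ i ∈ s', (∫⁻ t, (∫⋯∫⁻_s', f i ∂μ) (update x j t) ∂μ j) ^ κ) =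
              ∏ i ∈ s', ((∫⋯∫⁻_(insert j s'), f i ∂μ) x) ^ κ :=
            Finset.prod_congr rfl fun i _ => by rw [e1 i]
          have h2 : (∏ i ∈ (insert j s')ᶜ,
                (∫⁻ t, (∫⋯∫⁻_(insert i s'), f i ∂μ) (update x j t) ∂μ j) ^ κ) =
              ∏ i ∈ (insert j s')ᶜ, ((∫⋯∫⁻_(insert i (insert j s')), f i ∂μ) x) ^ κ :=
            Finset.prod_congr rfl fun i hi => by rw [e2 i hi]
          rw [h1, h2, Finset.prod_insert hj]
          ring

/-- The Loomis–Whitney-type inequality with distinct functions. -/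
lemma loomis_whitney (hι : 2 ≤ Fintype.card ι)
    (f : ι → (∀ i, A i) → ℝ≥0∞) (hf : ∀ i, Measurable (f i)) :
    ∫⁻ x, ∏ i, (∫⁻ t, f i (update x i t) ∂μ i) ^ ((Fintype.card ι - 1 : ℝ))⁻¹ ∂(Measure.pi μ) ≤
      ∏ i, (∫⁻ x, f i x ∂(Measure.pi μ)) ^ ((Fintype.card ι - 1 : ℝ))⁻¹ := by
  classical
  cases isEmpty_or_nonempty (∀ i, A i) with
  | inl h => simp [lintegral_of_isEmpty]
  | inr h =>
    inhabit ∀ i, A i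
    have key := lw_aux μ hι f hf Finset.univ default
    rw [lmarginal_univ] at key
    simp only [Finset.compl_univ, Finset.prod_empty, mul_one] at key
    calc ∫⁻ x, ∏ i, (∫⁻ t, f i (update x i t) ∂μ i) ^ ((Fintype.card ι - 1 : ℝ))⁻¹
          ∂(Measure.pi μ)
        = ∫⁻ x, ∏ i, ((∫⋯∫⁻_{i}, f i ∂μ) x) ^ ((Fintype.card ι - 1 : ℝ))⁻¹ ∂(Measure.pi μ) := by
          congr 1; ext x
          exact Finset.prod_congr rfl fun i _ => by rw [lmarginal_singleton]
      _ ≤ ∏ i, ((∫⋯∫⁻_Finset.univ, f i ∂μ) default) ^ ((Fintype.card ι - 1 : ℝ))⁻¹ := key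
      _ = _ := Finset.prod_congr rfl fun i _ => by rw [lmarginal_univ]


lemma dir_bound_real {E' : Type*} [NormedAddCommGroup E'] [NormedSpace ℝ E']
    {u : E' → ℝ} (hu : Differentiable ℝ u) {t : ℝ} (ht : 1 < t) (z : E') (e : E') :
    ‖fderiv ℝ (fun y => ‖u y‖ ^ t) z e‖ ≤ t * ‖u z‖ ^ (t - 1) * ‖fderiv ℝ u z e‖ := by
  have ht0 : (0:ℝ) < t := lt_trans zero_lt_one ht
  rw [hu.fderiv_norm_rpow ht]
  simp only [ContinuousLinearMap.coe_smul', Pi.smul_apply, ContinuousLinearMap.coe_comp',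
    Function.comp_apply, innerSL_apply_apply, smul_eq_mul, norm_mul]
  have hinner : (inner ℝ (u z) (fderiv ℝ u z e) : ℝ) = u z * fderiv ℝ u z e := by
    simp [RCLike.inner_apply]; ring
  rw [hinner, norm_mul]
  rw [Real.norm_eq_abs t, abs_of_nonneg ht0.le,
    Real.norm_eq_abs (‖u z‖ ^ (t-2)), abs_of_nonneg (Real.rpow_nonneg (norm_nonneg _) _)]
  rcases eq_or_ne (u z) 0 with h0 | h0
  · simp only [h0, norm_zero, mul_zero, zero_mul]
    positivity
  · have : ‖u z‖ ^ (t - 2) * ‖u z‖ = ‖u z‖ ^ (t - 1) := by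
      rw [← Real.rpow_add_one (by simpa using h0) (t-2)]
      ring_nf
    rw [show t * ‖u z‖ ^ (t-2) * (‖u z‖ * ‖fderiv ℝ u z e‖) =
      t * (‖u z‖ ^ (t-2) * ‖u z‖) * ‖fderiv ℝ u z e‖ from by ring, this]

lemma dir_bound {E' : Type*} [NormedAddCommGroup E'] [NormedSpace ℝ E']
    {u : E' → ℝ} (hu : Differentiable ℝ u) {t : ℝ} (ht : 1 < t) (z : E') (e : E') :
    (‖fderiv ℝ (fun y => ‖u y‖ ^ t) z e‖₊ : ℝ≥0∞) ≤
      ENNReal.ofReal t * (‖u z‖₊ : ℝ≥0∞) ^ (t - 1) * (‖fderiv ℝ u z e‖₊ : ℝ≥0∞) := by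
  have ht0 : (0:ℝ) < t := lt_trans zero_lt_one ht
  have h1 : (0:ℝ) ≤ t - 1 := by linarith
  calc (‖fderiv ℝ (fun y => ‖u y‖ ^ t) z e‖₊ : ℝ≥0∞)
      = ENNReal.ofReal ‖fderiv ℝ (fun y => ‖u y‖ ^ t) z e‖ := (ofReal_norm _).symm
    _ ≤ ENNReal.ofReal (t * ‖u z‖ ^ (t-1) * ‖fderiv ℝ u z e‖) :=
        ENNReal.ofReal_le_ofReal (dir_bound_real hu ht z e)
    _ = _ := by
        rw [ENNReal.ofReal_mul (by positivity), ENNReal.ofReal_mul ht0.le,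
          ← ENNReal.ofReal_rpow_of_nonneg (norm_nonneg _) h1,
          ofReal_norm, ofReal_norm]; rfl

/-- Pointwise FTC bound in direction `i` for the `t`-th power of `|u|`. -/
lemma pointwise_ftc {ι : Type*} [Fintype ι] [DecidableEq ι]
    {u : (ι → ℝ) → ℝ} (hu : ContDiff ℝ 1 u) (h2u : HasCompactSupport u)
    {t : ℝ} (ht : 1 < t) (i : ι) (x : ι → ℝ) :
    (‖u x‖₊ : ℝ≥0∞) ^ t ≤ ENNReal.ofReal t *
      ∫⁻ r, (‖u (update x i r)‖₊ : ℝ≥0∞) ^ (t - 1) *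
        (‖fderiv ℝ u (update x i r) (Pi.single i 1)‖₊ : ℝ≥0∞) := by
  have ht0 : (0:ℝ) < t := lt_trans zero_lt_one ht
  set v : (ι → ℝ) → ℝ := fun y => ‖u y‖ ^ t with hv_def
  have hv : ContDiff ℝ 1 v := hu.norm_rpow ht
  have h2v : HasCompactSupport v := h2u.norm.rpow_const ht0.ne'
  have hvcomp : ContDiff ℝ 1 (v ∘ update x i) := hv.comp (by convert contDiff_update 1 x i)
  have h2vcomp : HasCompactSupport (v ∘ update x i) :=
    h2v.comp_isClosedEmbedding (isClosedEmbedding_update x i)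
  calc (‖u x‖₊ : ℝ≥0∞) ^ t
      = (‖v x‖₊ : ℝ≥0∞) := by
        rw [hv_def]
        simp only [Real.nnnorm_rpow_of_nonneg (norm_nonneg _), nnnorm_norm]
        rw [ENNReal.coe_rpow_of_nonneg _ ht0.le]
    _ ≤ ∫⁻ r in Iic (x i), ‖deriv (v ∘ update x i) r‖₊ :=
        le_trans (by simp) (HasCompactSupport.enorm_le_lintegral_Ici_deriv hvcomp h2vcomp (x i))
    _ ≤ ∫⁻ r, (‖deriv (v ∘ update x i) r‖₊ : ℝ≥0∞) :=
        lintegral_mono' Measure.restrict_le_self le_rfl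
    _ ≤ ∫⁻ r, ENNReal.ofReal t * ((‖u (update x i r)‖₊ : ℝ≥0∞) ^ (t - 1) *
          (‖fderiv ℝ u (update x i r) (Pi.single i 1)‖₊ : ℝ≥0∞)) := by
        refine lintegral_mono fun r => ?_
        have hd : deriv (v ∘ update x i) r = fderiv ℝ v (update x i r) (Pi.single i 1) := by
          rw [fderiv_comp_deriv _ (hv.differentiable one_ne_zero).differentiableAt
            (hasDerivAt_update x i r).differentiableAt, deriv_update]
        rw [hd]
        have := dir_bound (hu.differentiable one_ne_zero) ht (update x i r) (Pi.single i 1)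
        rw [hv_def]
        calc (‖fderiv ℝ (fun y => ‖u y‖ ^ t) (update x i r) (Pi.single i 1)‖₊ : ℝ≥0∞)
            ≤ ENNReal.ofReal t * (‖u (update x i r)‖₊ : ℝ≥0∞) ^ (t - 1) *
              (‖fderiv ℝ u (update x i r) (Pi.single i 1)‖₊ : ℝ≥0∞) := this
          _ = _ := by ring
    _ = ENNReal.ofReal t * ∫⁻ r, (‖u (update x i r)‖₊ : ℝ≥0∞) ^ (t - 1) *
          (‖fderiv ℝ u (update x i r) (Pi.single i 1)‖₊ : ℝ≥0∞) :=
        lintegral_const_mul' _ _ ENNReal.ofReal_ne_top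


open scoped ENNReal
open Set Function Finset MeasureTheory Measure Real



variable {ι : Type*} [Fintype ι] [DecidableEq ι]

/-- finset product of rpow of a fixed base. -/
lemma rpow_sum_eq_prod (y : ℝ≥0∞) (hy0 : y ≠ 0) (hytop : y ≠ ⊤) (c : ι → ℝ) (s : Finset ι) :
    y ^ (∑ i ∈ s, c i) = ∏ i ∈ s, y ^ c i := by
  classical
  induction s using Finset.induction with
  | empty => simp
  | @insert j s hj ih =>
    rw [Finset.sum_insert hj, Finset.prod_insert hj, ENNReal.rpow_add _ _ hy0 hytop, ih]

lemma rpow_sum_eq_prod_of_pos [Nonempty ι] (y : ℝ≥0∞) (c : ι → ℝ) (hc : ∀ i, 0 < c i) :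
    y ^ (∑ i, c i) = ∏ i, y ^ c i := by
  rcases eq_or_ne y 0 with rfl | hy0
  · rw [ENNReal.zero_rpow_of_pos (Finset.sum_pos (fun i _ => hc i) Finset.univ_nonempty)]
    rw [eq_comm]
    exact Finset.prod_eq_zero (Finset.mem_univ (Classical.arbitrary ι))
      (ENNReal.zero_rpow_of_pos (hc _))
  rcases eq_or_ne y ⊤ with rfl | hytop
  · rw [ENNReal.top_rpow_of_pos (Finset.sum_pos (fun i _ => hc i) Finset.univ_nonempty), eq_comm,
      Finset.prod_congr rfl (fun i _ => ENNReal.top_rpow_of_pos (hc i)), Finset.prod_const]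
    rw [Finset.card_univ]; exact ENNReal.top_pow Fintype.card_ne_zero
  · exact rpow_sum_eq_prod y hy0 hytop c Finset.univ



end TroisiAuxSection

section Main

open MeasureTheory

/-- Troisi's anisotropic Sobolev inequality. -/
theorem troisi_anisotropic_sobolev
    (N : ℕ) (hN : 2 ≤ N) (p : Fin N → ℝ) (hp : ∀ i, 1 < p i)
    (pbar : ℝ) (hpbar : 1 / pbar = (1 / (N : ℝ)) * ∑ i, 1 / p i)
    (hpbarN : pbar < N)
    (pstar : ℝ) (hpstar : pstar = N * pbar / (N - pbar)) :
    ∃ C : ℝ, 0 < C ∧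
      ∀ u : (Fin N → ℝ) → ℝ, ContDiff ℝ (⊤ : ℕ∞) u → HasCompactSupport u →
        eLpNorm u (ENNReal.ofReal pstar) volume ≤
          ENNReal.ofReal C *
            ∏ i, (eLpNorm (fun x => fderiv ℝ u x (Pi.single i 1))
                (ENNReal.ofReal (p i)) volume) ^ ((1 : ℝ) / N) := by
  classical
  have hNR : (2:ℝ) ≤ N := by exact_mod_cast hN
  have hN0 : (0:ℝ) < N := by linarith
  have hN1 : (0:ℝ) < (N:ℝ) - 1 := by linarith
  haveI : Nonempty (Fin N) := ⟨⟨0, by omega⟩⟩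
  have hp0 : ∀ i, (0:ℝ) < p i := fun i => lt_trans one_pos (hp i)
  have hp1' : ∀ i, p i - 1 ≠ 0 := fun i => (sub_pos.2 (hp i)).ne'
  have hpbar0 : 0 < pbar := by
    have hpos : 0 < 1/pbar := by
      rw [hpbar]
      exact mul_pos (one_div_pos.2 hN0) (Finset.sum_pos (fun i _ => one_div_pos.2 (hp0 i)) Finset.univ_nonempty)
    exact one_div_pos.1 hpos
  have hNbar : 0 < (N:ℝ) - pbar := sub_pos.2 hpbarN
  have hs0 : 0 < pstar := by rw [hpstar]; exact div_pos (mul_pos hN0 hpbar0) hNbar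
  have hsum : ∑ i, 1/(p i) = N / pbar := by
    have h1 : (N:ℝ) * (1/pbar) = ∑ i, 1/p i := by
      rw [hpbar, ← mul_assoc]
      field_simp
    rw [← h1]
    field_simp
  set κ : ℝ := ((N:ℝ) - 1)⁻¹ with hκdef
  have hκ0 : 0 < κ := by rw [hκdef]; positivity
  set t : Fin N → ℝ := fun i => 1 + pstar * (1 - 1/p i) with ht_def
  have hip : ∀ i, 0 < 1 - 1/(p i) := fun i => by
    rw [sub_pos]
    exact (div_lt_one (hp0 i)).2 (hp i)
  have hti : ∀ i, 1 < t i := fun i => by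
    have := mul_pos hs0 (hip i)
    simp only [ht_def]
    linarith
  have hti0 : ∀ i, 0 < t i := fun i => lt_trans one_pos (hti i)
  set q : Fin N → ℝ := fun i => Real.conjExponent (p i) with hq_def
  have hq_eq : ∀ i, q i = p i / (p i - 1) := fun i => rfl
  have hqconj : ∀ i, (q i).HolderConjugate (p i) :=
    fun i => (Real.HolderConjugate.conjExponent (hp i)).symm
  have htiq : ∀ i, (t i - 1) * q i = pstar := fun i => by
    have h1 : p i ≠ 0 := (hp0 i).ne'
    have h2 : p i - 1 ≠ 0 := hp1' i
    have h3 : (1 - 1/p i) * (p i/(p i - 1)) = 1 := by field_simp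
    simp only [ht_def, add_sub_cancel_left, hq_eq]
    rw [mul_assoc, h3, mul_one]
  have hinvq : ∀ i, 1 / q i = 1 - 1/p i := fun i => by
    have h := (hqconj i).inv_add_inv_eq_one
    rw [one_div, one_div]
    linarith [h]
  have hsum_t : ∑ i, t i = pstar * ((N:ℝ) - 1) := by
    simp only [ht_def]
    rw [Finset.sum_add_distrib, Finset.sum_const, Finset.card_univ, Fintype.card_fin,
      ← Finset.mul_sum, Finset.sum_sub_distrib, Finset.sum_const, Finset.card_univ,
      Fintype.card_fin, hsum, hpstar]
    field_simp
    ring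
  set θ : ℝ := κ * ((N:ℝ) - N/pbar) with hθdef
  have hθsum : ∑ i, (1 - 1/p i) * κ = θ := by
    rw [← Finset.sum_mul, Finset.sum_sub_distrib, Finset.sum_const, Finset.card_univ,
      Fintype.card_fin, hsum, hθdef]
    ring
  have hpbar1 : 1 < pbar := by
    have h2 : 1/pbar < 1 := by
      rw [hpbar]
      calc (1/(N:ℝ)) * ∑ i, 1/p i < (1/(N:ℝ)) * ∑ _i : Fin N, (1:ℝ) := by
            apply mul_lt_mul_of_pos_left _ (by positivity)
            apply Finset.sum_lt_sum_of_nonempty Finset.univ_nonempty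
            intro i _
            rw [div_lt_one (hp0 i)]
            exact hp i
        _ = 1 := by simp; field_simp
    exact (div_lt_one hpbar0).1 h2
  have hθ0 : 0 ≤ θ := by
    rw [hθdef]
    have : (N:ℝ)/pbar ≤ N := by
      rw [div_le_iff₀ hpbar0]
      nlinarith
    apply mul_nonneg hκ0.le
    linarith
  have h1θ : 1 - θ = κ * ((N:ℝ) / pstar) := by
    rw [hθdef, hκdef, hpstar]
    field_simp
    ring
  have h1θ0 : 0 < 1 - θ := by
    rw [h1θ]
    positivity
  have hexp_final : (1 - θ) * (((N:ℝ) - 1)/N) = 1/pstar := by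
    rw [h1θ, hκdef]
    field_simp
  have hκm : κ * (((N:ℝ) - 1)/N) = 1/N := by
    rw [hκdef]
    field_simp
  -- the constant
  refine ⟨∏ i, (t i) ^ ((1:ℝ)/N), Finset.prod_pos fun i _ => Real.rpow_pos_of_pos (hti0 i) _, ?_⟩
  intro u hu h2u
  have hu1 : ContDiff ℝ 1 u := hu.of_le (by simp)
  have hcu : Continuous u := hu.continuous
  have hfd : Continuous (fderiv ℝ u) := hu.continuous_fderiv (by simp)
  set d : Fin N → (Fin N → ℝ) → ENNReal :=
    fun i x => (‖fderiv ℝ u x (Pi.single i 1)‖₊ : ENNReal) with hd_def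
  have hd_meas : ∀ i, Measurable (d i) := by
    intro i
    have : Continuous fun x => fderiv ℝ u x (Pi.single i 1) := by fun_prop
    exact this.nnnorm.measurable.coe_nnreal_ennreal
  set nn : (Fin N → ℝ) → ENNReal := fun x => (‖u x‖₊ : ENNReal) with hnn_def
  have hnn_meas : Measurable nn := hcu.nnnorm.measurable.coe_nnreal_ennreal
  set g : Fin N → (Fin N → ℝ) → ENNReal := fun i x => nn x ^ (t i - 1) * d i x with hg_def
  have hg_meas : ∀ i, Measurable (g i) :=
    fun i => (hnn_meas.pow_const _).mul (hd_meas i)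
  set B : Fin N → ENNReal := fun i => (∫⁻ x, d i x ^ (p i)) ^ (1/(p i)) with hB_def
  set X : ENNReal := ∫⁻ x, nn x ^ pstar with hX_def
  have hofReal_ne : ENNReal.ofReal pstar ≠ 0 := by
    simp [ENNReal.ofReal_eq_zero, not_le, hs0]
  have heLp : eLpNorm u (ENNReal.ofReal pstar) volume = X ^ (1/pstar) := by
    rw [eLpNorm_eq_lintegral_rpow_enorm_toReal hofReal_ne ENNReal.ofReal_ne_top,
      ENNReal.toReal_ofReal hs0.le]; rfl
  have heLpB : ∀ i, eLpNorm (fun x => fderiv ℝ u x (Pi.single i 1))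
      (ENNReal.ofReal (p i)) volume = B i := by
    intro i
    rw [eLpNorm_eq_lintegral_rpow_enorm_toReal (by simp [ENNReal.ofReal_eq_zero, not_le, hp0 i])
      ENNReal.ofReal_ne_top, ENNReal.toReal_ofReal (hp0 i).le]; rfl
  have hXtop : X ≠ ⊤ := by
    have hmem : MemLp u (ENNReal.ofReal pstar) volume :=
      hcu.memLp_of_hasCompactSupport (μ := volume) h2u
    have hlt := hmem.eLpNorm_lt_top
    rw [heLp] at hlt
    intro hX
    rw [hX, ENNReal.top_rpow_of_pos (by positivity)] at hlt
    exact (lt_irrefl _ hlt)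
  rcases eq_or_ne X 0 with hX0 | hX0
  · rw [heLp, hX0, ENNReal.zero_rpow_of_pos (by positivity)]
    exact zero_le
  -- main estimate
  have hTne : (∏ i, ENNReal.ofReal (t i) ^ κ) ≠ ⊤ :=
    (ENNReal.prod_lt_top fun i _ =>
      (ENNReal.rpow_lt_top_of_nonneg hκ0.le ENNReal.ofReal_ne_top)).ne
  have key : X ≤ (∏ i, ENNReal.ofReal (t i) ^ κ) * (∏ i, B i ^ κ) * X ^ θ := by
    calc X = ∫⁻ x, ∏ i, (nn x ^ (t i)) ^ κ := by
          refine lintegral_congr fun x => ?_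
          have h1 : pstar = ∑ i, t i * κ := by
            rw [← Finset.sum_mul, hsum_t, hκdef]
            field_simp
          rw [h1, rpow_sum_eq_prod_of_pos _ _ (fun i => mul_pos (hti0 i) hκ0)]
          exact Finset.prod_congr rfl fun i _ => ENNReal.rpow_mul _ _ _
      _ ≤ ∫⁻ x, ∏ i, (ENNReal.ofReal (t i) * ∫⁻ r, g i (Function.update x i r)) ^ κ := by
          refine lintegral_mono fun x => Finset.prod_le_prod' fun i _ =>
            ENNReal.rpow_le_rpow ?_ hκ0.le
          exact pointwise_ftc hu1 h2u (hti i) i x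
      _ = (∏ i, ENNReal.ofReal (t i) ^ κ) *
            ∫⁻ x, ∏ i, (∫⁻ r, g i (Function.update x i r)) ^ κ := by
          rw [← lintegral_const_mul' _ _ hTne]
          refine lintegral_congr fun x => ?_
          rw [← Finset.prod_mul_distrib]
          exact Finset.prod_congr rfl fun i _ => ENNReal.mul_rpow_of_nonneg _ _ hκ0.le
      _ ≤ (∏ i, ENNReal.ofReal (t i) ^ κ) * ∏ i, (∫⁻ x, g i x) ^ κ := by
          refine mul_le_mul_right ?_ _
          have hLW := loomis_whitney (μ := fun _ : Fin N => (volume : Measure ℝ))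
            (by simp [Fintype.card_fin]; omega) g hg_meas
          simp only [Fintype.card_fin] at hLW
          rw [hκdef]
          calc ∫⁻ x, ∏ i, (∫⁻ r, g i (Function.update x i r)) ^ (((N:ℝ) - 1))⁻¹
              = ∫⁻ x, ∏ i, (∫⁻ r, g i (Function.update x i r)) ^ (((N:ℝ) - 1))⁻¹
                  ∂(Measure.pi fun _ => volume) := by rw [← volume_pi]
            _ ≤ ∏ i, (∫⁻ x, g i x ∂(Measure.pi fun _ => volume)) ^ (((N:ℝ) - 1))⁻¹ := hLW
            _ = ∏ i, (∫⁻ x, g i x) ^ (((N:ℝ) - 1))⁻¹ := by rw [← volume_pi]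
      _ ≤ (∏ i, ENNReal.ofReal (t i) ^ κ) * ∏ i, (X ^ (1 - 1/p i) * B i) ^ κ := by
          refine mul_le_mul_right (Finset.prod_le_prod' fun i _ =>
            ENNReal.rpow_le_rpow ?_ hκ0.le) _
          have hHolder := ENNReal.lintegral_mul_le_Lp_mul_Lq volume (hqconj i)
            ((hnn_meas.pow_const (t i - 1)).aemeasurable) ((hd_meas i).aemeasurable)
          calc ∫⁻ x, g i x = ∫⁻ x, nn x ^ (t i - 1) * d i x := rfl
            _ ≤ (∫⁻ x, (nn x ^ (t i - 1)) ^ q i) ^ (1/q i) *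
                (∫⁻ x, d i x ^ p i) ^ (1/p i) := hHolder
            _ = X ^ (1 - 1/p i) * B i := by
                congr 1
                · have : ∀ x : Fin N → ℝ, (nn x ^ (t i - 1)) ^ q i = nn x ^ pstar := fun x => by
                    rw [← ENNReal.rpow_mul, htiq]
                  rw [lintegral_congr fun x => this x, ← hX_def, hinvq]
      _ = (∏ i, ENNReal.ofReal (t i) ^ κ) * (∏ i, B i ^ κ) * X ^ θ := by
          rw [mul_assoc]
          congr 1
          calc ∏ i, (X ^ (1 - 1/p i) * B i) ^ κ
              = ∏ i, (X ^ ((1 - 1/p i) * κ) * B i ^ κ) := by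
                refine Finset.prod_congr rfl fun i _ => ?_
                rw [ENNReal.mul_rpow_of_nonneg _ _ hκ0.le, ENNReal.rpow_mul]
            _ = (∏ i, X ^ ((1 - 1/p i) * κ)) * ∏ i, B i ^ κ := Finset.prod_mul_distrib
            _ = X ^ θ * ∏ i, B i ^ κ := by
                rw [← rpow_sum_eq_prod X hX0 hXtop _ Finset.univ, hθsum]
            _ = (∏ i, B i ^ κ) * X ^ θ := mul_comm _ _
  -- divide by `X ^ θ`
  have hXθ0 : X ^ θ ≠ 0 := (ENNReal.rpow_pos (pos_iff_ne_zero.mpr hX0) hXtop).ne'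
  have hXθtop : X ^ θ ≠ ⊤ := ENNReal.rpow_ne_top_of_nonneg hθ0 hXtop
  have hdiv : X ^ (1 - θ) ≤ (∏ i, ENNReal.ofReal (t i) ^ κ) * (∏ i, B i ^ κ) := by
    rw [ENNReal.rpow_sub _ _ hX0 hXtop, ENNReal.rpow_one, ENNReal.div_le_iff hXθ0 hXθtop]
    exact key
  -- raise to the power `(N-1)/N`
  have hm0 : (0:ℝ) ≤ ((N:ℝ) - 1)/N := by positivity
  have hfin := ENNReal.rpow_le_rpow hdiv hm0
  rw [← ENNReal.rpow_mul, hexp_final] at hfin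
  rw [ENNReal.mul_rpow_of_nonneg _ _ hm0] at hfin
  rw [← ENNReal.prod_rpow_of_nonneg hm0, ← ENNReal.prod_rpow_of_nonneg hm0] at hfin
  simp only [← ENNReal.rpow_mul, hκm] at hfin
  -- conclude
  rw [heLp]
  calc X ^ (1/pstar) ≤ (∏ i, ENNReal.ofReal (t i) ^ ((1:ℝ)/N)) * ∏ i, B i ^ ((1:ℝ)/N) := by
        convert hfin using 3
    _ = _ := by
        congr 1
        · rw [ENNReal.ofReal_prod_of_nonneg fun i _ => Real.rpow_nonneg (hti0 i).le _]
          exact Finset.prod_congr rfl fun i _ => ENNReal.ofReal_rpow_of_pos (hti0 i)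
        · exact Finset.prod_congr rfl fun i _ => by rw [heLpB i]

end Main
end

section
/- Let N ≥ 2 and let p_1, …, p_N ∈ (1, ∞) be exponents whose harmonic mean p̄ (defined by 1/p̄ = (1/N)·Σ_{i=1}^N 1/p_i) satisfies p̄ < N, and set p̄* = N·p̄/(N − p̄). Then there exists a constant C > 0, depending only on N and p_1, …, p_N, such that for every smooth compactly supported function u : ℝ^N → ℝ one has ‖u‖_{L^{p̄*}(ℝ^N)} ≤ (C/N) · Σ_{i=1}^N ‖∂u/∂x_i‖_{L^{p_i}(ℝ^N)}. -/
open MeasureTheory Finset Function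
open scoped ENNReal NNReal

section Helpers

private lemma prod_rpow_ne {ι : Type*} (s : Finset ι) {x : ℝ≥0∞} (hx : x ≠ 0) (h'x : x ≠ ⊤)
    (c : ι → ℝ) : ∏ i ∈ s, x ^ c i = x ^ (∑ i ∈ s, c i) := by
  induction s using Finset.cons_induction with
  | empty => simp
  | cons j s hj ih => rw [Finset.prod_cons, Finset.sum_cons, ENNReal.rpow_add _ _ hx h'x, ih]

private lemma prod_rpow_pos {ι : Type*} (s : Finset ι) (x : ℝ≥0∞) {c : ι → ℝ}
    (hc : ∀ i ∈ s, 0 < c i) : ∏ i ∈ s, x ^ c i = x ^ (∑ i ∈ s, c i) := by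
  rcases s.eq_empty_or_nonempty with rfl | hs
  · simp
  rcases eq_or_ne x 0 with rfl | hx
  · rw [ENNReal.zero_rpow_of_pos (Finset.sum_pos hc hs),
      Finset.prod_eq_zero hs.choose_spec (ENNReal.zero_rpow_of_pos (hc _ hs.choose_spec))]
  rcases eq_or_ne x ⊤ with rfl | h'x
  · calc ∏ i ∈ s, (⊤ : ℝ≥0∞) ^ c i = ∏ _i ∈ s, (⊤ : ℝ≥0∞) :=
          Finset.prod_congr rfl fun i hi => ENNReal.top_rpow_of_pos (hc i hi)
      _ = ⊤ := by
          rw [Finset.prod_const]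
          exact ENNReal.top_pow hs.card_pos.ne'
      _ = ⊤ ^ (∑ i ∈ s, c i) := (ENNReal.top_rpow_of_pos (Finset.sum_pos hc hs)).symm
  · exact prod_rpow_ne s hx h'x c

private lemma dir_deriv_bound {E : Type*} [NormedAddCommGroup E] [NormedSpace ℝ E]
    {u : E → ℝ} (hu : Differentiable ℝ u) {t : ℝ} (ht : 1 < t) (x : E) (e : E) :
    ‖fderiv ℝ (fun y => ‖u y‖ ^ t) x e‖ ≤ t * ‖u x‖ ^ (t - 1) * ‖fderiv ℝ u x e‖ := by
  rw [hu.fderiv_norm_rpow ht]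
  simp only [ContinuousLinearMap.coe_smul', Pi.smul_apply, ContinuousLinearMap.coe_comp',
    Function.comp_apply]
  rw [norm_smul]
  have h1 : ‖t * ‖u x‖ ^ (t - 2)‖ = t * ‖u x‖ ^ (t - 2) := by
    rw [Real.norm_eq_abs, abs_of_nonneg]
    positivity
  have h2 : ‖(innerSL ℝ (u x)) (fderiv ℝ u x e)‖ ≤ ‖u x‖ * ‖fderiv ℝ u x e‖ := by
    refine ((innerSL ℝ (u x)).le_opNorm _).trans_eq ?_
    rw [innerSL_apply_norm]
  calc ‖t * ‖u x‖ ^ (t - 2)‖ * ‖(innerSL ℝ (u x)) (fderiv ℝ u x e)‖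
      ≤ (t * ‖u x‖ ^ (t - 2)) * (‖u x‖ * ‖fderiv ℝ u x e‖) := by
        rw [h1]; exact mul_le_mul_of_nonneg_left h2 (by positivity)
    _ = t * (‖u x‖ ^ (t - 2) * ‖u x‖) * ‖fderiv ℝ u x e‖ := by ring
    _ = t * ‖u x‖ ^ (t - 1) * ‖fderiv ℝ u x e‖ := by
        have h3 : ‖u x‖ ^ (t - 1) = ‖u x‖ ^ (t - 2) * ‖u x‖ := by
          rw [show t - 1 = t - 2 + 1 by ring,
            Real.rpow_add_one' (norm_nonneg _) (ne_of_gt (by linarith : (0:ℝ) < t - 2 + 1))]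
        rw [← h3]

private lemma dir_deriv_bound' {E : Type*} [NormedAddCommGroup E] [NormedSpace ℝ E]
    {u : E → ℝ} (hu : Differentiable ℝ u) {t : ℝ} (ht : 1 < t) (x : E) (e : E) :
    (‖fderiv ℝ (fun y => ‖u y‖ ^ t) x e‖₊ : ℝ≥0∞) ≤
      ENNReal.ofReal t * ((‖u x‖₊ : ℝ≥0∞) ^ (t - 1) * (‖fderiv ℝ u x e‖₊ : ℝ≥0∞)) := by
  rw [← enorm_eq_nnnorm, ← enorm_eq_nnnorm, ← enorm_eq_nnnorm, ← ofReal_norm, ← ofReal_norm,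
    ← ofReal_norm,
    ENNReal.ofReal_rpow_of_nonneg (norm_nonneg _) (by linarith : (0:ℝ) ≤ t - 1),
    ← ENNReal.ofReal_mul (by positivity), ← ENNReal.ofReal_mul (by positivity)]
  exact ENNReal.ofReal_le_ofReal (by rw [← mul_assoc]; exact dir_deriv_bound hu ht x e)

private lemma ftc_bound {N : ℕ} {v : (Fin N → ℝ) → ℝ} (hv : ContDiff ℝ 1 v)
    (h2v : HasCompactSupport v) (i : Fin N) (x : Fin N → ℝ) :
    (‖v x‖₊ : ℝ≥0∞) ≤ ∫⁻ s, (‖fderiv ℝ v (Function.update x i s) (Pi.single i 1)‖₊ : ℝ≥0∞) := by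
  have hcomp : ContDiff ℝ 1 (v ∘ Function.update x i) :=
    hv.comp (by convert contDiff_update 1 x i)
  have h2comp : HasCompactSupport (v ∘ Function.update x i) :=
    h2v.comp_isClosedEmbedding (isClosedEmbedding_update x i)
  calc (‖v x‖₊ : ℝ≥0∞)
      ≤ ∫⁻ s in Set.Iic (x i), ‖deriv (v ∘ Function.update x i) s‖₊ := by
        apply le_trans (by simp) (HasCompactSupport.enorm_le_lintegral_Ici_deriv hcomp h2comp _)
    _ ≤ ∫⁻ s, ‖deriv (v ∘ Function.update x i) s‖₊ :=
        lintegral_mono' Measure.restrict_le_self le_rfl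
    _ = ∫⁻ s, (‖fderiv ℝ v (Function.update x i s) (Pi.single i 1)‖₊ : ℝ≥0∞) := by
        congr with s
        rw [fderiv_comp_deriv _ (hv.differentiable one_ne_zero).differentiableAt
          (hasDerivAt_update x i s).differentiableAt, deriv_update]

end Helpers


open MeasureTheory Finset Function
open scoped ENNReal

section LW
variable {ι : Type*} [Fintype ι] [DecidableEq ι]
    {π : ι → Type*} [∀ i, MeasurableSpace (π i)] (μ : ∀ i, Measure (π i))
    [∀ i, SigmaFinite (μ i)]

theorem my_lw_aux (hcard : 2 ≤ Fintype.card ι)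
    (g : ι → (∀ i, π i) → ℝ≥0∞) (hg : ∀ i, Measurable (g i))
    (hind : ∀ i x t, g i (Function.update x i t) = g i x)
    (s : Finset ι) :
    ∀ x, (∫⋯∫⁻_s, (fun y => ∏ i, g i y ^ (1 / (Fintype.card ι - 1 : ℝ))) ∂μ) x ≤
      ∏ i, ((∫⋯∫⁻_(s.erase i), g i ∂μ) x) ^ (1 / (Fintype.card ι - 1 : ℝ)) := by
  have hcard1 : (1 : ℝ) ≤ (Fintype.card ι - 1 : ℝ) := by
    have : (2:ℝ) ≤ Fintype.card ι := by exact_mod_cast hcard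
    linarith
  set r : ℝ := 1 / (Fintype.card ι - 1 : ℝ) with hr
  have hr0 : 0 ≤ r := by positivity
  have hmeas : Measurable (fun y => ∏ i, g i y ^ r) :=
    Finset.measurable_prod _ fun i _ => (hg i).pow_const _
  induction s using Finset.induction with
  | empty =>
    intro x
    simp
  | @insert j s hj ih =>
    intro x
    rw [lmarginal_insert _ hmeas hj x]
    have key : ∀ t : π j,
        (∫⋯∫⁻_s, (fun y => ∏ i, g i y ^ r) ∂μ) (update x j t) ≤
          ((∫⋯∫⁻_s, g j ∂μ) x) ^ r *
            ∏ i ∈ univ.erase j, ((∫⋯∫⁻_(s.erase i), g i ∂μ) (update x j t)) ^ r := by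
      intro t
      refine (ih (update x j t)).trans_eq ?_
      rw [← Finset.mul_prod_erase univ _ (mem_univ j)]
      congr 1
      rw [Finset.erase_eq_of_notMem hj, lmarginal_update_of_notMem (hg j) hj]
      congr 1
      congr 1
      ext y
      exact hind j y t
    calc ∫⁻ t, (∫⋯∫⁻_s, (fun y => ∏ i, g i y ^ r) ∂μ) (update x j t) ∂μ j
        ≤ ∫⁻ t, ((∫⋯∫⁻_s, g j ∂μ) x) ^ r *
            ∏ i ∈ univ.erase j, ((∫⋯∫⁻_(s.erase i), g i ∂μ) (update x j t)) ^ r ∂μ j :=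
          lintegral_mono key
      _ = ((∫⋯∫⁻_s, g j ∂μ) x) ^ r * ∫⁻ t,
            ∏ i ∈ univ.erase j, ((∫⋯∫⁻_(s.erase i), g i ∂μ) (update x j t)) ^ r ∂μ j := by
          rw [lintegral_const_mul]
          exact Finset.measurable_prod _ fun i _ =>
            (((hg i).lmarginal μ).comp (measurable_update x)).pow_const _
      _ ≤ ((∫⋯∫⁻_s, g j ∂μ) x) ^ r *
            ∏ i ∈ univ.erase j,
              (∫⁻ t, (∫⋯∫⁻_(s.erase i), g i ∂μ) (update x j t) ∂μ j) ^ r := by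
          gcongr
          refine ENNReal.lintegral_prod_norm_pow_le _
            (fun i _ => (((hg i).lmarginal μ).comp (measurable_update x)).aemeasurable) ?_
            (fun i _ => hr0)
          rw [Finset.sum_const, card_erase_of_mem (mem_univ j), Finset.card_univ,
            nsmul_eq_mul, hr]
          have h1 : (1:ℕ) ≤ Fintype.card ι := by omega
          rw [Nat.cast_sub h1, Nat.cast_one, mul_one_div, div_self (by linarith)]
      _ = ∏ i, ((∫⋯∫⁻_((insert j s).erase i), g i ∂μ) x) ^ r := by
          rw [← Finset.mul_prod_erase univ
            (fun i => ((∫⋯∫⁻_((insert j s).erase i), g i ∂μ) x) ^ r) (mem_univ j)]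
          congr 1
          · rw [Finset.erase_insert hj]
          · refine Finset.prod_congr rfl fun i hi => ?_
            have hij : j ≠ i := fun h => (Finset.mem_erase.mp hi).1 h.symm
            rw [Finset.erase_insert_of_ne hij,
              lmarginal_insert _ (hg i) (fun h => hj (Finset.mem_of_mem_erase h))]

theorem my_lw (hcard : 2 ≤ Fintype.card ι)
    (g : ι → (∀ i, π i) → ℝ≥0∞) (hg : ∀ i, Measurable (g i))
    (hind : ∀ i x t, g i (Function.update x i t) = g i x) (x : ∀ i, π i) :
    ∫⁻ y, ∏ i, g i y ^ (1 / (Fintype.card ι - 1 : ℝ)) ∂Measure.pi μ ≤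
      ∏ i, ((∫⋯∫⁻_(univ.erase i), g i ∂μ) x) ^ (1 / (Fintype.card ι - 1 : ℝ)) := by
  rw [lintegral_eq_lmarginal_univ x]
  exact my_lw_aux μ hcard g hg hind univ x

end LW

set_option maxHeartbeats 1000000 in
/-- Anisotropic Sobolev inequality with the arithmetic mean of the norms of the
partial derivatives on the right-hand side. -/
theorem anisotropic_sobolev_sum
    (N : ℕ) (hN : 2 ≤ N) (p : Fin N → ℝ) (hp : ∀ i, 1 < p i)
    (pbar : ℝ) (hpbar : 1 / pbar = (1 / (N : ℝ)) * ∑ i, 1 / p i)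
    (hpbarN : pbar < N)
    (pstar : ℝ) (hpstar : pstar = N * pbar / (N - pbar)) :
    ∃ C : ℝ, 0 < C ∧
      ∀ u : (Fin N → ℝ) → ℝ, ContDiff ℝ (⊤ : ℕ∞) u → HasCompactSupport u →
        eLpNorm u (ENNReal.ofReal pstar) volume ≤
          ENNReal.ofReal (C / N) *
            ∑ i, eLpNorm (fun x => fderiv ℝ u x (Pi.single i 1))
                (ENNReal.ofReal (p i)) volume := by
  classical
  -- ## Real-number preliminaries
  have hn2 : (2:ℝ) ≤ (N:ℝ) := by exact_mod_cast hN
  have hn0 : (0:ℝ) < N := by linarith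
  have hn1 : (1:ℝ) < N := by linarith
  have hp0 : ∀ i, (0:ℝ) < p i := fun i => lt_trans one_pos (hp i)
  have hne : (Finset.univ : Finset (Fin N)).Nonempty := ⟨⟨0, by omega⟩, Finset.mem_univ _⟩
  have hppos : (0:ℝ) < ∑ i, 1 / p i :=
    Finset.sum_pos (fun i _ => by have := hp0 i; positivity) hne
  have hpbar0 : 0 < pbar := by
    have hpos : 0 < 1 / (N:ℝ) * ∑ i, 1 / p i := by positivity
    rcases lt_trichotomy pbar 0 with h | h | h
    · exfalso
      have h1 : 1 / pbar < 0 := div_neg_of_pos_of_neg one_pos h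
      rw [hpbar] at h1
      linarith
    · exfalso
      rw [h, div_zero] at hpbar
      linarith
    · exact h
  have hpbar1 : 1 < pbar := by
    have hlt : ∑ i, 1 / p i < ∑ _i : Fin N, (1:ℝ) := by
      refine Finset.sum_lt_sum_of_nonempty hne fun i _ => ?_
      rw [div_lt_one (hp0 i)]
      exact hp i
    have h2 : 1 / pbar < 1 := by
      rw [hpbar]
      calc (1/(N:ℝ)) * ∑ i, 1/p i < (1/(N:ℝ)) * N := by
            refine mul_lt_mul_of_pos_left ?_ (by positivity)
            simpa using hlt
        _ = 1 := by field_simp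
    exact (div_lt_one hpbar0).mp h2
  have hS : (N:ℝ) / pbar = ∑ i, 1 / p i := by
    calc (N:ℝ) / pbar = N * (1 / pbar) := by ring
      _ = N * (1 / (N:ℝ) * ∑ i, 1 / p i) := by rw [hpbar]
      _ = ∑ i, 1 / p i := by field_simp
  have hNp : 0 < (N:ℝ) - pbar := by linarith
  have hps0 : 0 < pstar := by
    rw [hpstar]
    exact div_pos (mul_pos hn0 hpbar0) hNp
  set q : Fin N → ℝ := fun i => Real.conjExponent (p i) with hqdef
  have hpq : ∀ i, (p i).HolderConjugate (q i) := fun i => Real.HolderConjugate.conjExponent (hp i)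
  have hqp : ∀ i, (q i).HolderConjugate (p i) := fun i => (hpq i).symm
  set t : Fin N → ℝ := fun i => 1 + pstar / q i with htdef
  have ht1 : ∀ i, 1 < t i := fun i => by
    have h2 : 0 < pstar / q i := div_pos hps0 (hqp i).pos
    simp only [htdef]
    linarith
  have ht0 : ∀ i, (0:ℝ) < t i := fun i => lt_trans one_pos (ht1 i)
  have htq : ∀ i, (t i - 1) * q i = pstar := fun i => by
    have h1 := (hqp i).pos.ne'
    simp only [htdef]
    field_simp
    ring
  have htle : ∀ i, t i ≤ 1 + pstar := fun i => by
    have := div_le_self hps0.le (hqp i).lt.le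
    simp only [htdef]
    linarith
  have hqinv : ∀ i, (q i)⁻¹ = 1 - (p i)⁻¹ := fun i => by
    have := (hpq i).inv_add_inv_eq_one
    linarith
  set r : ℝ := 1 / ((N:ℝ) - 1) with hrdef
  have hr0 : 0 < r := by
    rw [hrdef]
    exact one_div_pos.mpr (by linarith)
  have hsumc : ∑ i, (q i)⁻¹ = (N:ℝ) - (N:ℝ) / pbar := by
    rw [Finset.sum_congr rfl fun i _ => hqinv i, Finset.sum_sub_distrib, hS]
    simp [Finset.card_univ, one_div]
  have hsumt : ∑ i, t i * r = pstar := by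
    rw [← Finset.sum_mul]
    have h1 : ∑ i, t i = (N:ℝ) + pstar * ((N:ℝ) - (N:ℝ)/pbar) := by
      have : ∀ i, t i = 1 + pstar * (q i)⁻¹ := fun i => by
        simp only [htdef]; rw [div_eq_mul_inv]
      rw [Finset.sum_congr rfl fun i _ => this i, Finset.sum_add_distrib,
        ← Finset.mul_sum, hsumc]
      simp [Finset.card_univ]
    rw [h1, hpstar, hrdef]
    have hpb : pbar ≠ 0 := hpbar0.ne'
    have hnp : (N:ℝ) - pbar ≠ 0 := hNp.ne'
    have hn1' : (N:ℝ) - 1 ≠ 0 := by intro h; nlinarith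
    field_simp
    ring
  set σ : ℝ := ((N:ℝ) - (N:ℝ)/pbar) * r with hσdef
  have hσ0 : 0 ≤ σ := by
    have h1 : (N:ℝ)/pbar ≤ N := div_le_self hn0.le hpbar1.le
    exact mul_nonneg (by linarith) hr0.le
  have key2 : (1 - σ) * pstar = (N:ℝ) * r := by
    rw [hσdef, hpstar, hrdef]
    have hpb : pbar ≠ 0 := hpbar0.ne'
    have hnp : (N:ℝ) - pbar ≠ 0 := hNp.ne'
    have hn1' : (N:ℝ) - 1 ≠ 0 := by intro h; nlinarith
    field_simp
    ring
  have key3 : 0 < 1 - σ := by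
    have h1 : 0 < (1 - σ) * pstar := by rw [key2]; positivity
    by_contra h
    push_neg at h
    nlinarith
  -- ## The constant
  refine ⟨N * (1 + pstar), by nlinarith, fun u hu h2u => ?_⟩
  have hu1 : ContDiff ℝ 1 u := hu.of_le (by simp)
  have hucont : Continuous u := hu1.continuous
  have hDcont : Continuous (fderiv ℝ u) := (hu1.fderiv_right (m := 0) le_rfl).continuous
  have hDi : ∀ i : Fin N, Continuous fun x => fderiv ℝ u x (Pi.single i 1) := fun i =>
    hDcont.clm_apply continuous_const
  let μ : Fin N → Measure ℝ := fun _ => volume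
  haveI : ∀ i, SigmaFinite (μ i) := fun _ => by infer_instance
  have hvolpi : (volume : Measure (Fin N → ℝ)) = Measure.pi μ := by
    exact MeasureTheory.volume_pi
  -- the auxiliary functions
  have hv : ∀ i : Fin N, ContDiff ℝ 1 (fun x : Fin N → ℝ => ‖u x‖ ^ t i) := fun i =>
    hu1.norm_rpow (ht1 i)
  have h2v : ∀ i : Fin N, HasCompactSupport (fun x : Fin N → ℝ => ‖u x‖ ^ t i) := fun i =>
    h2u.norm.rpow_const (ht0 i).ne'
  set F : Fin N → (Fin N → ℝ) → ℝ≥0∞ := fun i x =>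
    (‖fderiv ℝ (fun y : Fin N → ℝ => ‖u y‖ ^ t i) x (Pi.single i 1)‖₊ : ℝ≥0∞) with hFdef
  have hFcont : ∀ i, Continuous (fderiv ℝ (fun y : Fin N → ℝ => ‖u y‖ ^ t i)) := fun i =>
    ((hv i).fderiv_right (m := 0) le_rfl).continuous
  have hF : ∀ i, Measurable (F i) := fun i =>
    (ENNReal.continuous_coe.comp ((hFcont i).clm_apply continuous_const).nnnorm).measurable
  set G : Fin N → (Fin N → ℝ) → ℝ≥0∞ := fun i => ∫⋯∫⁻_{i}, F i ∂μ with hGdef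
  have hG : ∀ i, Measurable (G i) := fun i => (hF i).lmarginal μ
  have hGind : ∀ (i : Fin N) x s, G i (Function.update x i s) = G i x := fun i x s => by
    simp only [hGdef]
    exact lmarginal_update_of_mem (μ := μ) (Finset.mem_singleton_self i) (F i) x s
  have hGsing : ∀ i x, G i x = ∫⁻ s, F i (Function.update x i s) := fun i x => by
    simp only [hGdef]
    rw [lmarginal_singleton]
  -- main quantities
  set M : ℝ≥0∞ := ∫⁻ x, (‖u x‖₊ : ℝ≥0∞) ^ pstar ∂(volume : Measure (Fin N → ℝ)) with hMdef
  set B : Fin N → ℝ≥0∞ := fun i =>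
    (∫⁻ x, (‖fderiv ℝ u x (Pi.single i 1)‖₊ : ℝ≥0∞) ^ p i ∂(volume : Measure (Fin N → ℝ)))
      ^ (1 / p i) with hBdef
  -- identification of eLpNorms
  have hofps0 : ENNReal.ofReal pstar ≠ 0 := by
    simp [ENNReal.ofReal_eq_zero, not_le, hps0]
  have hLHS : eLpNorm u (ENNReal.ofReal pstar) volume = M ^ (1 / pstar) := by
    rw [eLpNorm_eq_lintegral_rpow_enorm_toReal hofps0 ENNReal.ofReal_ne_top,
      ENNReal.toReal_ofReal hps0.le]
    rfl
  have hRHS : ∀ i, eLpNorm (fun x => fderiv ℝ u x (Pi.single i 1))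
      (ENNReal.ofReal (p i)) volume = B i := fun i => by
    rw [eLpNorm_eq_lintegral_rpow_enorm_toReal
      (by simp [ENNReal.ofReal_eq_zero, not_le, hp0 i]) ENNReal.ofReal_ne_top,
      ENNReal.toReal_ofReal (hp0 i).le]
    rfl
  -- step 1 : the Loomis-Whitney estimate
  have step1 : M ≤ ∏ i, (∫⁻ x, F i x ∂(volume : Measure (Fin N → ℝ))) ^ r := by
    have hcard : 2 ≤ Fintype.card (Fin N) := by simp [Fintype.card_fin]; omega
    have hLW := my_lw μ hcard G hG hGind 0
    simp only [Fintype.card_fin] at hLW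
    calc M = ∫⁻ x, ∏ i, ((‖u x‖₊ : ℝ≥0∞) ^ t i) ^ r ∂(volume : Measure (Fin N → ℝ)) := by
          rw [hMdef]
          refine lintegral_congr fun x => ?_
          rw [← hsumt, ← prod_rpow_pos Finset.univ _
            (fun i _ => mul_pos (ht0 i) hr0)]
          exact Finset.prod_congr rfl fun i _ => ENNReal.rpow_mul _ _ _
      _ ≤ ∫⁻ x, ∏ i, (G i x) ^ r ∂(volume : Measure (Fin N → ℝ)) := by
          refine lintegral_mono fun x => Finset.prod_le_prod' fun i _ => ?_
          refine ENNReal.rpow_le_rpow ?_ hr0.le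
          have hnn : ((‖u x‖₊ : ℝ≥0∞)) ^ t i =
              (‖(fun y : Fin N → ℝ => ‖u y‖ ^ t i) x‖₊ : ℝ≥0∞) := by
            simp only
            rw [Real.nnnorm_rpow_of_nonneg (norm_nonneg _), ENNReal.coe_rpow_of_nonneg _
              (ht0 i).le, nnnorm_norm]
          rw [hnn, hGsing i x]
          exact ftc_bound (hv i) (h2v i) i x
      _ ≤ ∏ i, ((∫⋯∫⁻_(Finset.univ.erase i), G i ∂μ) 0) ^ r := by
          rw [hvolpi]
          exact hLW
      _ = ∏ i, (∫⁻ x, F i x ∂(volume : Measure (Fin N → ℝ))) ^ r := by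
          refine Finset.prod_congr rfl fun i _ => ?_
          congr 1
          have hdisj : Disjoint (Finset.univ.erase i) ({i} : Finset (Fin N)) := by simp
          have huniv : (Finset.univ.erase i) ∪ {i} = (Finset.univ : Finset (Fin N)) := by
            rw [Finset.union_comm, ← Finset.insert_eq, Finset.insert_erase (Finset.mem_univ i)]
          calc (∫⋯∫⁻_(Finset.univ.erase i), G i ∂μ) 0
              = (∫⋯∫⁻_((Finset.univ.erase i) ∪ {i}), F i ∂μ) 0 := by
                rw [lmarginal_union μ (F i) (hF i) hdisj]
            _ = (∫⋯∫⁻_Finset.univ, F i ∂μ) 0 := by rw [huniv]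
            _ = ∫⁻ x, F i x ∂Measure.pi μ := by rw [lmarginal_univ]
            _ = ∫⁻ x, F i x ∂(volume : Measure (Fin N → ℝ)) := by rw [← hvolpi]
  -- step 2 : Hölder for each factor
  have step2 : ∀ i, (∫⁻ x, F i x ∂(volume : Measure (Fin N → ℝ))) ≤
      ENNReal.ofReal (t i) * (M ^ (q i)⁻¹ * B i) := by
    intro i
    have haem1 : AEMeasurable (fun x : Fin N → ℝ => (‖u x‖₊ : ℝ≥0∞) ^ (t i - 1))
        (volume : Measure (Fin N → ℝ)) :=
      ((ENNReal.continuous_coe.comp hucont.nnnorm).measurable.pow_const _).aemeasurable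
    have haem2 : AEMeasurable (fun x : Fin N → ℝ => (‖fderiv ℝ u x (Pi.single i 1)‖₊ : ℝ≥0∞))
        (volume : Measure (Fin N → ℝ)) :=
      (ENNReal.continuous_coe.comp (hDi i).nnnorm).measurable.aemeasurable
    calc ∫⁻ x, F i x ∂(volume : Measure (Fin N → ℝ))
        ≤ ∫⁻ x, ENNReal.ofReal (t i) * ((‖u x‖₊ : ℝ≥0∞) ^ (t i - 1) *
            (‖fderiv ℝ u x (Pi.single i 1)‖₊ : ℝ≥0∞)) ∂(volume : Measure (Fin N → ℝ)) :=
          lintegral_mono fun x => dir_deriv_bound' (hu1.differentiable one_ne_zero) (ht1 i) x _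
      _ = ENNReal.ofReal (t i) * ∫⁻ x, (‖u x‖₊ : ℝ≥0∞) ^ (t i - 1) *
            (‖fderiv ℝ u x (Pi.single i 1)‖₊ : ℝ≥0∞) ∂(volume : Measure (Fin N → ℝ)) :=
          lintegral_const_mul' _ _ ENNReal.ofReal_ne_top
      _ ≤ ENNReal.ofReal (t i) *
            ((∫⁻ x, ((‖u x‖₊ : ℝ≥0∞) ^ (t i - 1)) ^ q i ∂(volume : Measure (Fin N → ℝ)))
                ^ (1 / q i) *
              (∫⁻ x, (‖fderiv ℝ u x (Pi.single i 1)‖₊ : ℝ≥0∞) ^ p i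
                  ∂(volume : Measure (Fin N → ℝ))) ^ (1 / p i)) := by
          gcongr
          exact ENNReal.lintegral_mul_le_Lp_mul_Lq _ (hqp i) haem1 haem2
      _ = ENNReal.ofReal (t i) * (M ^ (q i)⁻¹ * B i) := by
          have hinner : (∫⁻ x, ((‖u x‖₊ : ℝ≥0∞) ^ (t i - 1)) ^ q i
              ∂(volume : Measure (Fin N → ℝ))) = M := by
            rw [hMdef]
            exact lintegral_congr fun x => by rw [← ENNReal.rpow_mul, htq i]
          rw [hinner, one_div]
  -- finiteness and degenerate case
  by_cases hM0 : M = 0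
  · rw [hLHS, hM0, ENNReal.zero_rpow_of_pos (one_div_pos.mpr hps0)]
    exact zero_le
  have hMtop : M ≠ ⊤ := by
    have hfin := (hucont.memLp_of_hasCompactSupport
      (μ := (volume : Measure (Fin N → ℝ))) (p := ENNReal.ofReal pstar) h2u).eLpNorm_lt_top
    have hMeq : M = (eLpNorm u (ENNReal.ofReal pstar) volume) ^ pstar := by
      rw [hLHS, ← ENNReal.rpow_mul, one_div, inv_mul_cancel₀ hps0.ne', ENNReal.rpow_one]
    rw [hMeq]
    exact (ENNReal.rpow_lt_top_of_nonneg hps0.le hfin.ne).ne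
  -- step 3 : combining
  set D : ℝ≥0∞ := ENNReal.ofReal (1 + pstar) * ∑ i, B i with hDdef
  have step3 : M ≤ M ^ σ * D ^ ((N:ℝ) * r) := by
    calc M ≤ ∏ i, (∫⁻ x, F i x ∂(volume : Measure (Fin N → ℝ))) ^ r := step1
      _ ≤ ∏ i, (ENNReal.ofReal (t i) * (M ^ (q i)⁻¹ * B i)) ^ r := by
          exact Finset.prod_le_prod' fun i _ => ENNReal.rpow_le_rpow (step2 i) hr0.le
      _ = ∏ i, (M ^ (q i)⁻¹ * (ENNReal.ofReal (t i) * B i)) ^ r := by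
          refine Finset.prod_congr rfl fun i _ => ?_
          rw [mul_left_comm]
      _ ≤ ∏ i, (M ^ (q i)⁻¹ * D) ^ r := by
          refine Finset.prod_le_prod' fun i _ => ENNReal.rpow_le_rpow ?_ hr0.le
          refine mul_le_mul_right ?_ _
          rw [hDdef]
          exact mul_le_mul' (ENNReal.ofReal_le_ofReal (htle i))
            (Finset.single_le_sum (f := B) (fun j _ => zero_le) (Finset.mem_univ i))
      _ = (∏ i, (M ^ (q i)⁻¹) ^ r) * ∏ i : Fin N, D ^ r := by
          rw [← Finset.prod_mul_distrib]
          exact Finset.prod_congr rfl fun i _ =>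
            ENNReal.mul_rpow_of_nonneg _ _ hr0.le
      _ = M ^ σ * D ^ ((N:ℝ) * r) := by
          congr 1
          · calc ∏ i, (M ^ (q i)⁻¹) ^ r = ∏ i, M ^ ((q i)⁻¹ * r) :=
                Finset.prod_congr rfl fun i _ => (ENNReal.rpow_mul _ _ _).symm
              _ = M ^ (∑ i, (q i)⁻¹ * r) := prod_rpow_ne Finset.univ hM0 hMtop _
              _ = M ^ σ := by rw [← Finset.sum_mul, hsumc]
          · rw [Finset.prod_const, Finset.card_univ, Fintype.card_fin,
              ← ENNReal.rpow_natCast (D ^ r) N, ← ENNReal.rpow_mul, mul_comm r]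
  have step4 : M ^ (1 - σ) ≤ D ^ ((N:ℝ) * r) := by
    have hMσ0 : M ^ σ ≠ 0 := (ENNReal.rpow_pos (pos_iff_ne_zero.mpr hM0) hMtop).ne'
    have hMσtop : M ^ σ ≠ ⊤ := ENNReal.rpow_ne_top_of_nonneg hσ0 hMtop
    have hM1 : M = M ^ σ * M ^ (1 - σ) := by
      rw [← ENNReal.rpow_add _ _ hM0 hMtop]
      norm_num
    have step3' : M ^ σ * M ^ (1 - σ) ≤ M ^ σ * D ^ ((N:ℝ) * r) := by
      rw [← hM1]
      exact step3
    exact (ENNReal.mul_le_mul_iff_right hMσ0 hMσtop).mp step3'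
  have step5 : M ^ (1 / pstar) ≤ D := by
    have h1σ : (1:ℝ) - σ ≠ 0 := key3.ne'
    have h1σps : (1 - σ) * pstar ≠ 0 := (mul_pos key3 hps0).ne'
    calc M ^ (1 / pstar) = (M ^ (1 - σ)) ^ (1 / ((1 - σ) * pstar)) := by
          rw [← ENNReal.rpow_mul]
          congr 1
          have h2 : pstar ≠ 0 := hps0.ne'
          field_simp
      _ ≤ (D ^ ((N:ℝ) * r)) ^ (1 / ((1 - σ) * pstar)) :=
          ENNReal.rpow_le_rpow step4 (one_div_pos.mpr (mul_pos key3 hps0)).le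
      _ = D := by
          rw [← ENNReal.rpow_mul, show (N:ℝ) * r * (1 / ((1 - σ) * pstar)) = 1 from by
            rw [← key2, mul_one_div, div_self h1σps], ENNReal.rpow_one]
  -- conclusion
  calc eLpNorm u (ENNReal.ofReal pstar) volume = M ^ (1 / pstar) := hLHS
    _ ≤ D := step5
    _ = ENNReal.ofReal ((N * (1 + pstar)) / N) *
        ∑ i, eLpNorm (fun x => fderiv ℝ u x (Pi.single i 1)) (ENNReal.ofReal (p i)) volume := by
        rw [hDdef, show ((N:ℝ) * (1 + pstar)) / N = 1 + pstar from by field_simp]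
        congr 1
        exact Finset.sum_congr rfl fun i _ => (hRHS i).symm
end

section
/- (Biting lemma of Chacon.) Let Ω be a bounded open subset of ℝ^N and let (f_n)_n be a sequence in L¹(Ω) that is bounded in L¹-norm. Then there exist f ∈ L¹(Ω), a subsequence (f_{n_k})_k, and a sequence of measurable sets (E_j)_j with E_j ⊆ Ω, E_{j+1} ⊆ E_j for all j, and meas(E_j) → 0 as j → ∞, such that for every j, f_{n_k} converges to f weakly in L¹(Ω ∖ E_j), i.e. for every bounded measurable function g : Ω ∖ E_j → ℝ one has ∫_{Ω∖E_j} f_{n_k}·g dx → ∫_{Ω∖E_j} f·g dx as k → ∞. -/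
/-!
Clip the functions at level `m`. For each `m` the clipped functions are bounded in `L²`, so along
one subsequence they converge weakly in `L²` to some `G m`, for every `m` at once, while the
clipping errors `∫ |f - clip m f|` converge to numbers `d m` that decrease to some `d₀`. Testing
against the sign of `G m - G m'` gives `‖G m - G m'‖₁ ≤ d m - d m'`, so `G m → g` in `L¹`.
After a further extraction, the mass `d₀` that escapes to infinity sits, for the `k`-th function,
in the bite `{2 ^ k ≤ |f|}`, of measure at most `M / 2 ^ k`. Outside the union `E j` of the bites
with index `≥ j`, the clipping error at level `m` is then asymptotically at most `d m - d₀`,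
uniformly in `k`, and an `ε / 3` argument gives weak convergence to `g` there.
-/

open MeasureTheory Filter Set Topology
open scoped ENNReal InnerProductSpace

noncomputable def clip (c r : ℝ) : ℝ := max (-c) (min r c)

lemma continuous_clip (c : ℝ) : Continuous (clip c) :=
  continuous_const.max (continuous_id.min continuous_const)

lemma abs_clip_le {c : ℝ} (hc : 0 ≤ c) (r : ℝ) : |clip c r| ≤ c := by
  unfold clip; grind

lemma clip_eq_self {c r : ℝ} (h : |r| ≤ c) : clip c r = r := by
  unfold clip; grind

lemma abs_sub_clip_le_abs {c : ℝ} (hc : 0 ≤ c) (r : ℝ) : |r - clip c r| ≤ |r| := by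
  unfold clip; grind

lemma abs_sub_clip_antitone {c c' : ℝ} (hc : 0 ≤ c) (h : c ≤ c') (r : ℝ) :
    |r - clip c' r| ≤ |r - clip c r| := by
  unfold clip; grind

lemma abs_clip_sub_clip {c c' : ℝ} (hc : 0 ≤ c) (h : c ≤ c') (r : ℝ) :
    |clip c' r - clip c r| = |r - clip c r| - |r - clip c' r| := by
  unfold clip; grind

lemma antitone_iUnion_add {α : Type*} (S : ℕ → Set α) : Antitone fun j => ⋃ i, S (i + j) := by
  intro j j' hjj' x hx
  obtain ⟨i, hi⟩ := mem_iUnion.1 hx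
  exact mem_iUnion.2 ⟨i + (j' - j), by rwa [add_assoc, Nat.sub_add_cancel hjj']⟩

lemma exists_subseq_forall_tendsto {ι : Type*} [Countable ι] (a : ℕ → ι → ℝ)
    (ha : ∀ i, ∃ C, ∀ n, |a n i| ≤ C) :
    ∃ φ : ℕ → ℕ, StrictMono φ ∧ ∃ L : ι → ℝ,
      ∀ i, Tendsto (fun n => a (φ n) i) atTop (𝓝 (L i)) := by
  choose C hC using ha
  obtain ⟨L, -, φ, hφ, hL⟩ := (isCompact_univ_pi fun i => isCompact_Icc).tendsto_subseq
    fun n i _ => abs_le.1 (hC i n)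
  exact ⟨φ, hφ, L, fun i => ((continuous_apply i).tendsto L).comp hL⟩

section Hilbert

variable {H : Type*} [NormedAddCommGroup H] [InnerProductSpace ℝ H]

lemma cauchySeq_inner_of_dense {u : ℕ → H} {C : ℝ} (hC : ∀ n, ‖u n‖ ≤ C) {D : Set H}
    (hD : Dense D) (hcau : ∀ v ∈ D, CauchySeq fun n => ⟪u n, v⟫_ℝ) (v : H) :
    CauchySeq fun n => ⟪u n, v⟫_ℝ := by
  have hC₀ : 0 ≤ C := (norm_nonneg _).trans (hC 0)
  have hclose : ∀ n v', dist ⟪u n, v⟫_ℝ ⟪u n, v'⟫_ℝ ≤ C * dist v v' := fun n v' => by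
    rw [Real.dist_eq, ← inner_sub_right, dist_eq_norm]
    exact (abs_real_inner_le_norm _ _).trans (by gcongr; exact hC n)
  rw [Metric.cauchySeq_iff']
  intro ε hε
  obtain ⟨v', hv'D, hvv'⟩ : ∃ v' ∈ D, dist v v' < ε / (3 * (C + 1)) := by
    obtain ⟨v', hv', hv'D⟩ := Metric.dense_iff.1 hD v (ε / (3 * (C + 1))) (div_pos hε (by linarith))
    exact ⟨v', hv'D, Metric.mem_ball'.1 hv'⟩
  have hδ : C * dist v v' < ε / 3 := by
    calc C * dist v v' ≤ (C + 1) * dist v v' := by gcongr; linarith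
      _ < (C + 1) * (ε / (3 * (C + 1))) := by gcongr
      _ = ε / 3 := by field_simp
  obtain ⟨N, hN⟩ := Metric.cauchySeq_iff'.1 (hcau v' hv'D) (ε / 3) (by positivity)
  refine ⟨N, fun n hn => ?_⟩
  calc dist ⟪u n, v⟫_ℝ ⟪u N, v⟫_ℝ
      ≤ dist ⟪u n, v⟫_ℝ ⟪u n, v'⟫_ℝ + dist ⟪u n, v'⟫_ℝ ⟪u N, v'⟫_ℝ
        + dist ⟪u N, v'⟫_ℝ ⟪u N, v⟫_ℝ := dist_triangle4 _ _ _ _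
    _ < ε / 3 + ε / 3 + ε / 3 := by
      rw [dist_comm ⟪u N, v'⟫_ℝ]
      gcongr
      · exact (hclose n v').trans_lt hδ
      · exact hN n hn
      · exact (hclose N v').trans_lt hδ
    _ = ε := by ring

variable [CompleteSpace H]

lemma exists_tendsto_inner_of_dense {u : ℕ → H} {C : ℝ} (hC : ∀ n, ‖u n‖ ≤ C) {D : Set H}
    (hD : Dense D) (hcau : ∀ v ∈ D, CauchySeq fun n => ⟪u n, v⟫_ℝ) :
    ∃ w : H, ∀ v, Tendsto (fun n => ⟪u n, v⟫_ℝ) atTop (𝓝 ⟪w, v⟫_ℝ) := by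
  choose ℓ hℓ using fun v =>
    cauchySeq_tendsto_of_complete (cauchySeq_inner_of_dense hC hD hcau v)
  let T : H →L[ℝ] ℝ := continuousLinearMapOfTendsto (fun n => innerSL ℝ (u n))
    (tendsto_pi_nhds.2 hℓ)
  refine ⟨(InnerProductSpace.toDual ℝ H).symm T, fun v => ?_⟩
  rw [InnerProductSpace.toDual_symm_apply]
  exact hℓ v

lemma exists_subseq_tendsto_inner_and_tendsto [TopologicalSpace.SeparableSpace H]
    (u : ℕ → ℕ → H) (hu : ∀ m, ∃ C, ∀ n, ‖u n m‖ ≤ C)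
    (a : ℕ → ℕ → ℝ) (ha : ∀ m, ∃ C, ∀ n, |a n m| ≤ C) :
    ∃ φ : ℕ → ℕ, StrictMono φ ∧ ∃ (w : ℕ → H) (d : ℕ → ℝ),
      (∀ m v, Tendsto (fun k => ⟪u (φ k) m, v⟫_ℝ) atTop (𝓝 ⟪w m, v⟫_ℝ)) ∧
      ∀ m, Tendsto (fun k => a (φ k) m) atTop (𝓝 (d m)) := by
  set e := TopologicalSpace.denseSeq H
  obtain ⟨φ, hφ, L, hL⟩ := exists_subseq_forall_tendsto
    (fun n => Sum.elim (fun p : ℕ × ℕ => ⟪u n p.1, e p.2⟫_ℝ) (a n)) (by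
      rintro (⟨m, i⟩ | m)
      · obtain ⟨C, hC⟩ := hu m
        exact ⟨C * ‖e i‖, fun n => (abs_real_inner_le_norm _ _).trans
          (mul_le_mul_of_nonneg_right (hC n) (norm_nonneg _))⟩
      · exact ha m)
  choose w hw using fun m => exists_tendsto_inner_of_dense (u := fun k => u (φ k) m)
    (fun k => (hu m).choose_spec (φ k)) (TopologicalSpace.denseRange_denseSeq H)
    (by rintro _ ⟨i, rfl⟩; exact (hL (.inl (m, i))).cauchySeq)
  exact ⟨φ, hφ, w, fun m => L (.inr m), hw, fun m => hL (.inr m)⟩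

end Hilbert

section Measure

variable {α : Type*} [MeasurableSpace α] {μ : Measure α}

lemma abs_integral_mul_le {u h : α → ℝ} (hu : Integrable u μ) {C : ℝ} (hC : ∀ x, |h x| ≤ C) :
    |∫ x, u x * h x ∂μ| ≤ C * ∫ x, |u x| ∂μ := by
  rw [← integral_const_mul]
  refine (abs_integral_le_integral_abs).trans
    (integral_mono_of_nonneg (ae_of_all _ fun x => abs_nonneg _) (hu.abs.const_mul C)
      (ae_of_all _ fun x => ?_))
  dsimp only
  rw [abs_mul, mul_comm C]
  exact mul_le_mul_of_nonneg_left (hC x) (abs_nonneg _)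

lemma real_inner_toLp_right (F : Lp ℝ 2 μ) {v : α → ℝ} (hv : MemLp v 2 μ) :
    ⟪F, hv.toLp v⟫_ℝ = ∫ x, F x * v x ∂μ := by
  rw [L2.inner_def]
  refine integral_congr_ae ?_
  filter_upwards [hv.coeFn_toLp] with x hx
  rw [hx, real_inner_eq_re_inner, RCLike.inner_apply]
  simp [mul_comm]

lemma exists_tendsto_integral_abs_sub_of_cauchy {G : ℕ → α → ℝ} (hG : ∀ m, Integrable (G m) μ)
    {b : ℕ → ℝ} (hb : Tendsto b atTop (𝓝 0))
    (hcau : ∀ m m', m ≤ m' → ∫ x, |G m x - G m' x| ∂μ ≤ b m) :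
    ∃ g : α → ℝ, Integrable g μ ∧ Tendsto (fun m => ∫ x, |G m x - g x| ∂μ) atTop (𝓝 0) := by
  have hdist : ∀ m (F : α →₁[μ] ℝ), dist ((hG m).toL1 _) F = ∫ x, |G m x - F x| ∂μ := by
    intro m F
    rw [L1.dist_eq_integral_dist]
    refine integral_congr_ae ?_
    filter_upwards [(hG m).coeFn_toL1] with x hx
    rw [hx, Real.dist_eq]
  have hcauchy : CauchySeq fun m => (hG m).toL1 _ := by
    refine cauchySeq_of_le_tendsto_0' b (fun m m' hmm' => ?_) hb
    rw [hdist]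
    refine le_trans (le_of_eq (integral_congr_ae ?_)) (hcau m m' hmm')
    filter_upwards [(hG m').coeFn_toL1] with x hx
    rw [hx]
  obtain ⟨F, hF⟩ := cauchySeq_tendsto_of_complete hcauchy
  refine ⟨F, L1.integrable_coeFn F, ?_⟩
  simpa only [hdist] using (tendsto_iff_dist_tendsto_zero.1 hF)

lemma tendsto_measure_iUnion_add_zero {S : ℕ → Set α} (hS : ∑' i, μ (S i) ≠ ∞) :
    Tendsto (fun j => μ (⋃ i, S (i + j))) atTop (𝓝 0) :=
  tendsto_of_tendsto_of_tendsto_of_le_of_le tendsto_const_nhds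
    (ENNReal.tendsto_sum_nat_add _ hS) (fun _ => zero_le) fun _ => measure_iUnion_le _

lemma measure_two_pow_le_abs_le {f : α → ℝ} (hf : Integrable f μ) {M : ℝ}
    (hM : ∫ x, |f x| ∂μ ≤ M) (k : ℕ) :
    μ {x | 2 ^ k ≤ |f x|} ≤ ENNReal.ofReal M * 2⁻¹ ^ k := by
  have h2k : (0 : ℝ) < 2 ^ k := by positivity
  calc μ {x | 2 ^ k ≤ |f x|} ≤ ENNReal.ofReal (∫ x, |f x| / 2 ^ k ∂μ) :=
        (hf.abs.div_const _).measure_le_integral (ae_of_all _ fun x => by positivity)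
          fun x hx => (one_le_div h2k).2 hx
    _ ≤ ENNReal.ofReal (M * 2⁻¹ ^ k) := by
        rw [integral_div, inv_pow, ← div_eq_mul_inv]
        gcongr
    _ = ENNReal.ofReal M * 2⁻¹ ^ k := by
        rw [ENNReal.ofReal_mul' (by positivity), ENNReal.ofReal_pow (by norm_num),
          ENNReal.ofReal_inv_of_pos two_pos, ENNReal.ofReal_ofNat]

lemma exists_biting_sets {f : ℕ → α → ℝ} (hf : ∀ k, Integrable (f k) μ) {M : ℝ}
    (hM : ∀ k, ∫ x, |f k x| ∂μ ≤ M) :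
    ∃ E : ℕ → Set α, (∀ j, MeasurableSet (E j)) ∧ Antitone E ∧
      Tendsto (fun j => μ (E j)) atTop (𝓝 0) ∧
      ∀ j k, j ≤ k → ∀ᵐ x ∂μ, x ∈ (E j)ᶜ → |f k x| ≤ 2 ^ k := by
  set F : ℕ → α → ℝ := fun k => (hf k).1.mk
  set S : ℕ → Set α := fun k => {x | 2 ^ k ≤ |F k x|}
  have hS : ∀ k, MeasurableSet (S k) := fun k =>
    measurableSet_le measurable_const (hf k).1.stronglyMeasurable_mk.measurable.abs
  have hF : ∀ k, F k =ᵐ[μ] f k := fun k => (hf k).1.ae_eq_mk.symm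
  have hsum : ∑' k, μ (S k) ≠ ∞ := by
    refine ne_top_of_le_ne_top ?_ (ENNReal.tsum_le_tsum fun k => measure_two_pow_le_abs_le
      ((hf k).congr (hF k).symm) ((integral_congr_ae ((hF k).fun_comp abs)).trans_le (hM k)) k)
    rw [ENNReal.tsum_mul_left, ENNReal.tsum_geometric, ENNReal.one_sub_inv_two, inv_inv]
    finiteness
  refine ⟨fun j => ⋃ i, S (i + j), fun j => MeasurableSet.iUnion fun i => hS _,
    antitone_iUnion_add S, tendsto_measure_iUnion_add_zero hsum, fun j k hjk => ?_⟩
  filter_upwards [hF k] with x hx hxE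
  have hxS : x ∉ S k := fun hxS => hxE (mem_iUnion.2 ⟨k - j, by rwa [Nat.sub_add_cancel hjk]⟩)
  rw [← hx]
  exact (not_le.1 hxS).le

noncomputable def clipError (μ : Measure α) (f : α → ℝ) (c : ℝ) : ℝ :=
  ∫ x, |f x - clip c (f x)| ∂μ

lemma integrable_abs_sub_clip {f : α → ℝ} (hf : Integrable f μ) {c : ℝ} (hc : 0 ≤ c) :
    Integrable (fun x => |f x - clip c (f x)|) μ :=
  hf.abs.mono' ((hf.1.sub ((continuous_clip c).comp_aestronglyMeasurable hf.1)).norm)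
    (ae_of_all _ fun x => by simpa using abs_sub_clip_le_abs hc (f x))

lemma clipError_nonneg (f : α → ℝ) (c : ℝ) : 0 ≤ clipError μ f c :=
  integral_nonneg fun _ => abs_nonneg _

lemma clipError_le {f : α → ℝ} (hf : Integrable f μ) {c : ℝ} (hc : 0 ≤ c) :
    clipError μ f c ≤ ∫ x, |f x| ∂μ :=
  integral_mono (integrable_abs_sub_clip hf hc) hf.abs fun x => abs_sub_clip_le_abs hc (f x)

lemma clipError_antitone {f : α → ℝ} (hf : Integrable f μ) {c c' : ℝ} (hc : 0 ≤ c)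
    (h : c ≤ c') : clipError μ f c' ≤ clipError μ f c :=
  integral_mono (integrable_abs_sub_clip hf (hc.trans h)) (integrable_abs_sub_clip hf hc)
    fun x => abs_sub_clip_antitone hc h (f x)

lemma integral_abs_clip_sub_clip {f : α → ℝ} (hf : Integrable f μ) {c c' : ℝ} (hc : 0 ≤ c)
    (h : c ≤ c') :
    ∫ x, |clip c' (f x) - clip c (f x)| ∂μ = clipError μ f c - clipError μ f c' := by
  simp only [abs_clip_sub_clip hc h]
  exact integral_sub (integrable_abs_sub_clip hf hc) (integrable_abs_sub_clip hf (hc.trans h))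

lemma setIntegral_abs_sub_clip_le {f : α → ℝ} (hf : Integrable f μ) {s : Set α}
    (hs : MeasurableSet s) {c c' : ℝ} (hc : 0 ≤ c) (h : c ≤ c')
    (hfs : ∀ᵐ x ∂μ, x ∈ s → |f x| ≤ c') :
    ∫ x in s, |f x - clip c (f x)| ∂μ ≤ clipError μ f c - clipError μ f c' := by
  calc ∫ x in s, |f x - clip c (f x)| ∂μ
      = ∫ x in s, (|f x - clip c (f x)| - |f x - clip c' (f x)|) ∂μ := by
        refine setIntegral_congr_ae hs ?_
        filter_upwards [hfs] with x hx hxs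
        rw [clip_eq_self (hx hxs), sub_self, abs_zero, sub_zero]
    _ ≤ ∫ x, (|f x - clip c (f x)| - |f x - clip c' (f x)|) ∂μ :=
        setIntegral_le_integral
          ((integrable_abs_sub_clip hf hc).sub (integrable_abs_sub_clip hf (hc.trans h)))
          (ae_of_all _ fun x => sub_nonneg.2 (abs_sub_clip_antitone hc h (f x)))
    _ = clipError μ f c - clipError μ f c' :=
        integral_sub (integrable_abs_sub_clip hf hc) (integrable_abs_sub_clip hf (hc.trans h))

lemma eventually_setIntegral_abs_sub_clip_le {f : ℕ → α → ℝ} (hf : ∀ k, Integrable (f k) μ)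
    {d : ℕ → ℝ} (hd : ∀ m : ℕ, Tendsto (fun k => clipError μ (f k) m) atTop (𝓝 (d m)))
    {d₀ : ℝ} (hd₀ : Tendsto d atTop (𝓝 d₀)) {L : ℕ → ℝ} (hL : Tendsto L atTop atTop)
    (hL₀ : ∀ η > 0, ∀ᶠ k in atTop, d₀ - η ≤ clipError μ (f k) (L k))
    {s : Set α} (hs : MeasurableSet s) (hfs : ∀ᶠ k in atTop, ∀ᵐ x ∂μ, x ∈ s → |f k x| ≤ L k) :
    ∀ ε > 0, ∀ᶠ m : ℕ in atTop, ∀ᶠ k in atTop, ∫ x in s, |f k x - clip m (f k x)| ∂μ ≤ ε := by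
  intro ε hε
  filter_upwards [hd₀.eventually (gt_mem_nhds (show d₀ < d₀ + ε / 3 by linarith))] with m hm
  filter_upwards [hfs, hL₀ (ε / 3) (by positivity),
    (hd m).eventually (gt_mem_nhds (show d m < d m + ε / 3 by linarith)),
    hL.eventually_ge_atTop (m : ℝ)] with k hks hk₀ hkm hLk
  have := setIntegral_abs_sub_clip_le (hf k) hs m.cast_nonneg hLk hks
  linarith

variable [IsFiniteMeasure μ]

lemma memLp_clip_comp {f : α → ℝ} (hf : AEStronglyMeasurable f μ) {c : ℝ}
    (hc : 0 ≤ c) (p : ℝ≥0∞) : MemLp (fun x => clip c (f x)) p μ :=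
  MemLp.of_bound ((continuous_clip c).comp_aestronglyMeasurable hf) c
    (ae_of_all _ fun x => abs_clip_le hc (f x))

lemma integral_abs_le_of_tendsto_inner {u : ℕ → Lp ℝ 2 μ} {w : Lp ℝ 2 μ}
    (hw : ∀ v, Tendsto (fun k => ⟪u k, v⟫_ℝ) atTop (𝓝 ⟪w, v⟫_ℝ)) {a : ℕ → ℝ} {b : ℝ}
    (ha : Tendsto a atTop (𝓝 b)) (hua : ∀ k, ∫ x, |u k x| ∂μ ≤ a k) :
    ∫ x, |w x| ∂μ ≤ b := by
  set ψ : α → ℝ := fun x => if 0 ≤ w x then 1 else -1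
  have hψ : ∀ x, |ψ x| ≤ 1 := fun x => by simp only [ψ]; split_ifs <;> simp
  have hwψ : ∀ x, w x * ψ x = |w x| := fun x => by
    simp only [ψ]; split_ifs with h
    · rw [mul_one, abs_of_nonneg h]
    · rw [mul_neg_one, abs_of_neg (not_le.1 h)]
  have hψ_meas : AEStronglyMeasurable ψ μ :=
    (Measurable.ite (measurableSet_le measurable_const (Lp.stronglyMeasurable w).measurable)
      measurable_const measurable_const).aestronglyMeasurable
  have hψ_mem : MemLp ψ 2 μ := MemLp.of_bound hψ_meas 1 (ae_of_all _ hψ)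
  have hlim := hw (hψ_mem.toLp ψ)
  simp only [real_inner_toLp_right, hwψ] at hlim
  refine le_of_tendsto_of_tendsto' hlim ha fun k => ?_
  calc ∫ x, u k x * ψ x ∂μ ≤ 1 * ∫ x, |u k x| ∂μ :=
        (le_abs_self _).trans (abs_integral_mul_le
          ((Lp.memLp (u k)).integrable one_le_two) hψ)
    _ ≤ a k := by rw [one_mul]; exact hua k

section ClipLimits

variable {f : ℕ → α → ℝ} (hf : ∀ k, Integrable (f k) μ) {V : ℕ → ℕ → Lp ℝ 2 μ}
  (hV : ∀ k m, V k m =ᵐ[μ] fun x => clip m (f k x)) {G : ℕ → Lp ℝ 2 μ}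
  (hG : ∀ m v, Tendsto (fun k => ⟪V k m, v⟫_ℝ) atTop (𝓝 ⟪G m, v⟫_ℝ))
include hf hV hG

lemma integral_abs_sub_le_of_tendsto_clip {d : ℕ → ℝ}
    (hd : ∀ m : ℕ, Tendsto (fun k => clipError μ (f k) m) atTop (𝓝 (d m))) {m m' : ℕ}
    (hmm' : m ≤ m') : ∫ x, |G m x - G m' x| ∂μ ≤ d m - d m' := by
  have hcoe : ∀ F F' : Lp ℝ 2 μ, ∫ x, |(F - F') x| ∂μ = ∫ x, |F x - F' x| ∂μ := fun F F' =>
    integral_congr_ae (by filter_upwards [Lp.coeFn_sub F F'] with x hx; rw [hx, Pi.sub_apply])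
  rw [← hcoe]
  refine integral_abs_le_of_tendsto_inner (u := fun k => V k m - V k m') (fun v => ?_)
    ((hd m).sub (hd m')) fun k => ?_
  · simpa only [inner_sub_left] using (hG m v).sub (hG m' v)
  · rw [hcoe, ← integral_abs_clip_sub_clip (hf k) m.cast_nonneg (Nat.cast_le.2 hmm')]
    refine (integral_congr_ae ?_).le
    filter_upwards [hV k m, hV k m'] with x hx hx'
    rw [hx, hx', abs_sub_comm]

lemma tendsto_integral_mul_of_tendsto_clip {g : α → ℝ}
    (hg : Integrable g μ) (hGg : Tendsto (fun m => ∫ x, |G m x - g x| ∂μ) atTop (𝓝 0))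
    {s : Set α} (hs : ∀ ε > 0, ∀ᶠ m : ℕ in atTop, ∀ᶠ k in atTop,
      ∫ x in s, |f k x - clip m (f k x)| ∂μ ≤ ε)
    {h : α → ℝ} (hh : AEStronglyMeasurable h μ) {C : ℝ} (hC : ∀ x, |h x| ≤ C)
    (hhs : ∀ x ∉ s, h x = 0) :
    Tendsto (fun k => ∫ x, f k x * h x ∂μ) atTop (𝓝 (∫ x, g x * h x ∂μ)) := by
  set K := |C| + 1
  have hK : 0 < K := by positivity
  have hhK : ∀ x, |h x| ≤ K := fun x => (hC x).trans ((le_abs_self C).trans (by linarith))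
  have hmul : ∀ u : α → ℝ, Integrable u μ → Integrable (fun x => u x * h x) μ :=
    fun u hu => hu.mul_bdd hh (ae_of_all _ hhK)
  have hclip : ∀ k (m : ℕ), Integrable (fun x => clip m (f k x)) μ := fun k m =>
    memLp_one_iff_integrable.1 (memLp_clip_comp (hf k).1 m.cast_nonneg 1)
  have hGint : ∀ m, Integrable (G m) μ := fun m => (Lp.memLp (G m)).integrable one_le_two
  have hh₂ : MemLp h 2 μ := MemLp.of_bound hh K (ae_of_all _ hhK)
  have hVΨ : ∀ k m, ⟪V k m, hh₂.toLp h⟫_ℝ = ∫ x, clip m (f k x) * h x ∂μ := fun k m => by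
    rw [real_inner_toLp_right]
    exact integral_congr_ae (by filter_upwards [hV k m] with x hx; rw [hx])
  have hsplit : ∀ k (m : ℕ), ∫ x, f k x * h x ∂μ - ∫ x, g x * h x ∂μ =
      ∫ x in s, (f k x - clip m (f k x)) * h x ∂μ
        + (⟪V k m, hh₂.toLp h⟫_ℝ - ⟪G m, hh₂.toLp h⟫_ℝ)
        + ∫ x, (G m x - g x) * h x ∂μ := fun k m => by
    rw [setIntegral_eq_integral_of_forall_compl_eq_zero fun x hx => by rw [hhs x hx, mul_zero],
      hVΨ, real_inner_toLp_right]
    simp only [sub_mul]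
    rw [integral_sub (hmul _ (hf k)) (hmul _ (hclip k m)),
      integral_sub (hmul _ (hGint m)) (hmul _ hg)]
    ring
  rw [Metric.tendsto_nhds]
  intro ε hε
  have hεK : 0 < ε / (3 * K) := by positivity
  have hKε : K * (ε / (3 * K)) = ε / 3 := by field_simp
  obtain ⟨m, hm_s, hm_G⟩ :=
    ((hs _ hεK).and (hGg.eventually (gt_mem_nhds hεK))).exists
  filter_upwards [hm_s, (hG m (hh₂.toLp h)).eventually
    (Metric.ball_mem_nhds _ (by positivity : 0 < ε / 3))] with k hk_s hk_G
  have h₁ : |∫ x in s, (f k x - clip m (f k x)) * h x ∂μ| ≤ ε / 3 :=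
    (abs_integral_mul_le ((hf k).sub (hclip k m)).integrableOn hhK).trans
      (hKε ▸ mul_le_mul_of_nonneg_left hk_s hK.le)
  have h₃ : |∫ x, (G m x - g x) * h x ∂μ| ≤ ε / 3 :=
    (abs_integral_mul_le ((hGint m).sub hg) hhK).trans
      (hKε ▸ mul_le_mul_of_nonneg_left hm_G.le hK.le)
  rw [Real.dist_eq, hsplit k m]
  rw [Real.dist_eq] at hk_G
  calc _ ≤ _ := abs_add_three _ _ _
    _ < ε := by linarith

end ClipLimits

lemma exists_subseq_tendsto_clip [IsSeparable μ] {f : ℕ → α → ℝ}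
    (hf : ∀ n, Integrable (f n) μ) {M : ℝ} (hM : ∀ n, ∫ x, |f n x| ∂μ ≤ M) :
    ∃ V : ℕ → ℕ → Lp ℝ 2 μ, (∀ n m, V n m =ᵐ[μ] fun x => clip m (f n x)) ∧
    ∃ φ : ℕ → ℕ, StrictMono φ ∧ ∃ (G : ℕ → Lp ℝ 2 μ) (d : ℕ → ℝ),
      (∀ m v, Tendsto (fun k => ⟪V (φ k) m, v⟫_ℝ) atTop (𝓝 ⟪G m, v⟫_ℝ)) ∧
      ∀ m : ℕ, Tendsto (fun k => clipError μ (f (φ k)) m) atTop (𝓝 (d m)) := by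
  have hclip : ∀ n (m : ℕ), MemLp (fun x => clip m (f n x)) 2 μ := fun n m =>
    memLp_clip_comp (hf n).1 m.cast_nonneg 2
  set V : ℕ → ℕ → Lp ℝ 2 μ := fun n m => (hclip n m).toLp _
  have hV : ∀ n m, V n m =ᵐ[μ] fun x => clip m (f n x) := fun n m => (hclip n m).coeFn_toLp
  have : Fact ((2 : ℝ≥0∞) ≠ ∞) := ⟨ENNReal.ofNat_ne_top⟩
  refine ⟨V, hV, exists_subseq_tendsto_inner_and_tendsto V
    (fun m => ⟨_, fun n => Lp.norm_le_of_ae_bound m.cast_nonneg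
      (by filter_upwards [hV n m] with x hx; rw [hx]; exact abs_clip_le m.cast_nonneg _)⟩)
    (fun n m => clipError μ (f n) m) fun m => ⟨M, fun n => ?_⟩⟩
  rw [abs_of_nonneg (clipError_nonneg _ _)]
  exact (clipError_le (hf n) m.cast_nonneg).trans (hM n)

theorem exists_biting_subseq [IsSeparable μ] {f : ℕ → α → ℝ}
    (hf : ∀ n, Integrable (f n) μ) {M : ℝ} (hM : ∀ n, ∫ x, |f n x| ∂μ ≤ M) :
    ∃ g : α → ℝ, Integrable g μ ∧ ∃ φ : ℕ → ℕ, StrictMono φ ∧ ∃ E : ℕ → Set α,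
      (∀ j, MeasurableSet (E j)) ∧ Antitone E ∧ Tendsto (fun j => μ (E j)) atTop (𝓝 0) ∧
      ∀ j (h : α → ℝ), AEStronglyMeasurable h μ → (∃ C, ∀ x, |h x| ≤ C) →
        (∀ x ∈ E j, h x = 0) →
        Tendsto (fun k => ∫ x, f (φ k) x * h x ∂μ) atTop (𝓝 (∫ x, g x * h x ∂μ)) := by
  obtain ⟨V, hV, φ₁, hφ₁, G, d, hG, hd⟩ := exists_subseq_tendsto_clip hf hM
  have hd_anti : Antitone d := fun m m' hmm' => le_of_tendsto_of_tendsto' (hd m') (hd m)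
    fun k => clipError_antitone (hf _) m.cast_nonneg (Nat.cast_le.2 hmm')
  have hd_bdd : BddBelow (range d) :=
    ⟨0, forall_mem_range.2 fun m => ge_of_tendsto' (hd m) fun k => clipError_nonneg _ _⟩
  set d₀ := ⨅ m, d m
  have hd₀ : Tendsto d atTop (𝓝 d₀) := tendsto_atTop_ciInf hd_anti hd_bdd
  have hd₀_le : ∀ m, d₀ ≤ d m := ciInf_le hd_bdd
  obtain ⟨g, hg, hGg⟩ := exists_tendsto_integral_abs_sub_of_cauchy
    (fun m => (Lp.memLp (G m)).integrable one_le_two) (b := fun m => d m - d₀)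
    (by simpa using hd₀.sub_const d₀) fun m m' hmm' =>
      (integral_abs_sub_le_of_tendsto_clip (fun k => hf (φ₁ k)) (fun k m => hV (φ₁ k) m) hG hd
        hmm').trans (by linarith [hd₀_le m'])
  -- The `k`-th function of the final subsequence keeps clipping error about `d₀` at level `2 ^ k`,
  -- so off its bite `{2 ^ k ≤ |f|}` its clipping error at level `m` is at most about `d m - d₀`.
  have hlevel : ∀ k : ℕ, ∀ᶠ n in atTop,
      d₀ - 1 / (k + 1) ≤ clipError μ (f (φ₁ n)) (2 ^ k) := fun k => by
    have := hd (2 ^ k)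
    push_cast at this
    exact this.eventually (eventually_ge_nhds
      (by linarith [hd₀_le (2 ^ k), Nat.one_div_pos_of_nat (α := ℝ) (n := k)]))
  obtain ⟨κ, hκ, hκ_level⟩ := extraction_forall_of_eventually hlevel
  set φ := φ₁ ∘ κ
  obtain ⟨E, hE, hE_anti, hE_zero, hE_bound⟩ :=
    exists_biting_sets (fun k => hf (φ k)) (fun k => hM (φ k))
  refine ⟨g, hg, φ, hφ₁.comp hκ, E, hE, hE_anti, hE_zero, fun j h hh ⟨C, hC⟩ hhE => ?_⟩
  refine tendsto_integral_mul_of_tendsto_clip (fun k => hf (φ k)) (fun k m => hV (φ k) m)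
    (fun m v => (hG m v).comp hκ.tendsto_atTop) hg hGg ?_ hh hC
    fun x hx => hhE x (not_not.1 hx)
  refine eventually_setIntegral_abs_sub_clip_le (fun k => hf (φ k))
    (fun m => (hd m).comp hκ.tendsto_atTop) hd₀ (L := fun k => 2 ^ k)
    (tendsto_pow_atTop_atTop_of_one_lt one_lt_two) (fun η hη => ?_) (hE j).compl
    (eventually_atTop.2 ⟨j, fun k hk => hE_bound j k hk⟩)
  filter_upwards [tendsto_one_div_add_atTop_nhds_zero_nat.eventually (gt_mem_nhds hη)] with k hk
  exact (sub_le_sub_left hk.le d₀).trans (hκ_level k)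

end Measure

/-- The biting lemma of Chacon. -/
theorem biting_lemma_of_chacon
    (N : ℕ) (Ω : Set (Fin N → ℝ)) (hΩo : IsOpen Ω) (hΩb : Bornology.IsBounded Ω)
    (f : ℕ → (Fin N → ℝ) → ℝ)
    (hint : ∀ n, IntegrableOn (f n) Ω volume)
    (hbd : ∃ M : ℝ, ∀ n, ∫ x in Ω, |f n x| ≤ M) :
    ∃ g : (Fin N → ℝ) → ℝ, IntegrableOn g Ω volume ∧
    ∃ φ : ℕ → ℕ, StrictMono φ ∧
    ∃ E : ℕ → Set (Fin N → ℝ),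
      (∀ j, MeasurableSet (E j) ∧ E j ⊆ Ω) ∧
      (∀ j, E (j + 1) ⊆ E j) ∧
      Tendsto (fun j => volume (E j)) atTop (nhds 0) ∧
      (∀ j, ∀ h : (Fin N → ℝ) → ℝ, Measurable h →
        (∃ M : ℝ, ∀ x ∈ Ω \ E j, |h x| ≤ M) →
        Tendsto (fun k => ∫ x in Ω \ E j, f (φ k) x * h x) atTop
          (nhds (∫ x in Ω \ E j, g x * h x))) := by
  obtain ⟨M, hM⟩ := hbd
  have hΩ : MeasurableSet Ω := hΩo.measurableSet
  have : IsFiniteMeasure (volume.restrict Ω) :=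
    isFiniteMeasure_restrict.2 hΩb.measure_lt_top.ne
  obtain ⟨g, hg, φ, hφ, E, hE, hE_anti, hE_zero, hconv⟩ :=
    exists_biting_subseq hint hM
  refine ⟨g, hg, φ, hφ, fun j => Ω ∩ E j, fun j => ⟨hΩ.inter (hE j), inter_subset_left⟩,
    fun j => inter_subset_inter_right _ (hE_anti j.le_succ), ?_, fun j h hh ⟨C, hC⟩ => ?_⟩
  · simpa only [Measure.restrict_apply (hE _), inter_comm] using hE_zero
  have hΩE : Ω \ (Ω ∩ E j) = Ω \ E j := sdiff_self_inter
  have hrestrict : ∀ u : (Fin N → ℝ) → ℝ, ∫ x in Ω \ (Ω ∩ E j), u x * h x =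
      ∫ x, u x * (Ω \ E j).indicator h x ∂volume.restrict Ω := fun u => by
    simp only [← indicator_mul_right]
    rw [integral_indicator (hΩ.diff (hE j)), Measure.restrict_restrict (hΩ.diff (hE j)),
      inter_eq_left.2 sdiff_subset, hΩE]
  simp only [hrestrict]
  refine hconv j _ (hh.indicator (hΩ.diff (hE j))).aestronglyMeasurable ⟨|C|, fun x => ?_⟩
    fun x hx => indicator_of_notMem (fun hx' => hx'.2 hx) _
  by_cases hx : x ∈ Ω \ E j
  · rw [indicator_of_mem hx]; exact (hC x (hΩE ▸ hx)).trans (le_abs_self C)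
  · rw [indicator_of_notMem hx, abs_zero]; exact abs_nonneg C
end

section
/- Let (X, 𝔪) be a finite measure space, let q ∈ [1, ∞), and let (u_n)_n be a sequence of measurable real-valued functions on X. Assume: (i) for every θ > 0 there exists k > 0 such that 𝔪({x : |u_n(x)| > k}) ≤ θ for all n; and (ii) for every k > 0 the sequence of truncations (T_k ∘ u_n)_n is a Cauchy sequence in L^q(𝔪). Then (u_n)_n is Cauchy in measure: for all s > 0 and θ > 0 there exists n₀ such that 𝔪({x : |u_n(x) − u_m(x)| > s}) ≤ θ for all n, m ≥ n₀. -/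
open MeasureTheory

/-!
Off the set where `|u n| > k` or `|u m| > k`, the difference `u n - u m` coincides with the
difference of the truncations `T_k u n - T_k u m`. The tail hypothesis makes the first two
sets small uniformly in `n, m`, and Chebyshev's inequality turns smallness of the `L^q` norm
of the truncated difference into smallness of the measure of the third set.
-/

lemma max_neg_min_eq_self_of_abs_le {k r : ℝ} (h : |r| ≤ k) : max (-k) (min k r) = r := by
  rw [min_eq_right (abs_le.mp h).2, max_eq_right (abs_le.mp h).1]

lemma setOf_lt_abs_sub_subset {X : Type*} (f g : X → ℝ) (k s : ℝ) :
    {x | s < |f x - g x|} ⊆ {x | k < |f x|} ∪ {x | k < |g x|} ∪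
      {x | s ≤ |max (-k) (min k (f x)) - max (-k) (min k (g x))|} := by
  intro x hx
  by_cases hf : k < |f x|
  · exact Or.inl (Or.inl hf)
  by_cases hg : k < |g x|
  · exact Or.inl (Or.inr hg)
  rw [not_lt] at hf hg
  right
  simp only [Set.mem_ofPred_eq, max_neg_min_eq_self_of_abs_le hf,
    max_neg_min_eq_self_of_abs_le hg]
  exact hx.le

lemma measure_lt_abs_sub_le {X : Type*} [MeasurableSpace X] (μ : Measure X)
    (f g : X → ℝ) (k s : ℝ) :
    μ {x | s < |f x - g x|} ≤ μ {x | k < |f x|} + μ {x | k < |g x|} +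
      μ {x | s ≤ |max (-k) (min k (f x)) - max (-k) (min k (g x))|} :=
  (measure_mono (setOf_lt_abs_sub_subset f g k s)).trans <|
    (measure_union_le _ _).trans (add_le_add_left (measure_union_le _ _) _)

lemma measure_le_abs_le_of_eLpNorm_le {X : Type*} [MeasurableSpace X] {μ : Measure X}
    {f : X → ℝ} (hf : AEStronglyMeasurable f μ) {q s δ : ℝ} (hq : 0 < q) (hs : 0 < s)
    (hδ : 0 ≤ δ) (h : eLpNorm f (ENNReal.ofReal q) μ ≤ ENNReal.ofReal (s * δ ^ (1 / q))) :
    μ {x | s ≤ |f x|} ≤ ENNReal.ofReal δ := by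
  have hs' : ENNReal.ofReal s ≠ 0 := by simpa using hs
  have hset : {x | s ≤ |f x|} = {x | ENNReal.ofReal s ≤ ‖f x‖ₑ} := by
    ext x
    simp [Real.enorm_eq_ofReal_abs, ENNReal.ofReal_le_ofReal_iff (abs_nonneg _)]
  have hchebyshev := meas_ge_le_mul_pow_eLpNorm_enorm μ (by simpa using hq) ENNReal.ofReal_ne_top
    hf hs' (by simp)
  rw [hset, ENNReal.toReal_ofReal hq.le] at *
  refine hchebyshev.trans ?_
  calc (ENNReal.ofReal s)⁻¹ ^ q * eLpNorm f (ENNReal.ofReal q) μ ^ q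
      ≤ (ENNReal.ofReal s)⁻¹ ^ q * ENNReal.ofReal (s * δ ^ (1 / q)) ^ q := by
        gcongr
    _ = ENNReal.ofReal δ := by
        rw [ENNReal.ofReal_mul hs.le, ENNReal.mul_rpow_of_nonneg _ _ hq.le, ← mul_assoc,
          ENNReal.inv_rpow, ENNReal.inv_mul_cancel
            (by simp [ENNReal.rpow_eq_zero_iff, hs', hq])
            (ENNReal.rpow_ne_top_of_nonneg hq.le ENNReal.ofReal_ne_top),
          one_mul, ENNReal.ofReal_rpow_of_nonneg (by positivity) hq.le,
          ← Real.rpow_mul hδ, one_div, inv_mul_cancel₀ hq.ne', Real.rpow_one]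

theorem cauchy_in_measure_of_truncations_general
    {X : Type*} [MeasurableSpace X] (μ : Measure X)
    (q : ℝ) (hq : 1 ≤ q)
    (u : ℕ → X → ℝ) (hmeas : ∀ n, Measurable (u n))
    (htail : ∀ θ : ℝ, 0 < θ → ∃ k : ℝ, 0 < k ∧
      ∀ n, μ {x | k < |u n x|} ≤ ENNReal.ofReal θ)
    (htrunc : ∀ k : ℝ, 0 < k → ∀ ε : ℝ, 0 < ε → ∃ n₀ : ℕ, ∀ n ≥ n₀, ∀ m ≥ n₀,
      eLpNorm (fun x => max (-k) (min k (u n x)) - max (-k) (min k (u m x)))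
        (ENNReal.ofReal q) μ ≤ ENNReal.ofReal ε) :
    ∀ s : ℝ, 0 < s → ∀ θ : ℝ, 0 < θ → ∃ n₀ : ℕ, ∀ n ≥ n₀, ∀ m ≥ n₀,
      μ {x | s < |u n x - u m x|} ≤ ENNReal.ofReal θ := by
  intro s hs θ hθ
  have hq₀ : 0 < q := one_pos.trans_le hq
  obtain ⟨k, hk, hk_tail⟩ := htail (θ / 3) (by positivity)
  obtain ⟨n₀, hn₀⟩ := htrunc k hk (s * (θ / 3) ^ (1 / q)) (by positivity)
  refine ⟨n₀, fun n hn m hm => ?_⟩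
  have htrunc_small := measure_le_abs_le_of_eLpNorm_le (by fun_prop) hq₀ hs (by positivity)
    (hn₀ n hn m hm)
  calc μ {x | s < |u n x - u m x|}
      ≤ ENNReal.ofReal (θ / 3) + ENNReal.ofReal (θ / 3) + ENNReal.ofReal (θ / 3) :=
        (measure_lt_abs_sub_le μ (u n) (u m) k s).trans <|
          add_le_add (add_le_add (hk_tail n) (hk_tail m)) htrunc_small
    _ = ENNReal.ofReal θ := by
        rw [← ENNReal.ofReal_add (by positivity) (by positivity),
          ← ENNReal.ofReal_add (by positivity) (by positivity)]
        ring_nf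

/-- If a sequence of measurable functions has uniformly small tails and all its
truncations are Cauchy in `L^q`, then the sequence is Cauchy in measure. -/
theorem cauchy_in_measure_of_truncations
    {X : Type*} [MeasurableSpace X] (μ : Measure X) [IsFiniteMeasure μ]
    (q : ℝ) (hq : 1 ≤ q)
    (u : ℕ → X → ℝ) (hmeas : ∀ n, Measurable (u n))
    (htail : ∀ θ : ℝ, 0 < θ → ∃ k : ℝ, 0 < k ∧
      ∀ n, μ {x | k < |u n x|} ≤ ENNReal.ofReal θ)
    (htrunc : ∀ k : ℝ, 0 < k → ∀ ε : ℝ, 0 < ε → ∃ n₀ : ℕ, ∀ n ≥ n₀, ∀ m ≥ n₀,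
      eLpNorm (fun x => max (-k) (min k (u n x)) - max (-k) (min k (u m x)))
        (ENNReal.ofReal q) μ ≤ ENNReal.ofReal ε) :
    ∀ s : ℝ, 0 < s → ∀ θ : ℝ, 0 < θ → ∃ n₀ : ℕ, ∀ n ≥ n₀, ∀ m ≥ n₀,
      μ {x | s < |u n x - u m x|} ≤ ENNReal.ofReal θ :=
  cauchy_in_measure_of_truncations_general μ q hq u hmeas htail htrunc
end

section
/- (Minty's theorem in ℝ.) Let β ⊆ ℝ × ℝ be a nonempty maximal monotone graph. Then for every ε > 0 and every s ∈ ℝ there exists exactly one pair (r, w) ∈ β such that r + ε·w = s. In particular, the resolvent J_ε = (I + εβ)^{-1} is a well-defined single-valued function from ℝ to ℝ. -/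
/-- `β ⊆ ℝ × ℝ` is a monotone graph. -/
def IsMonotoneGraph (β : Set (ℝ × ℝ)) : Prop :=
  ∀ p ∈ β, ∀ q ∈ β, 0 ≤ (p.1 - q.1) * (p.2 - q.2)

/-- `β ⊆ ℝ × ℝ` is a maximal monotone graph. -/
def IsMaximalMonotoneGraph (β : Set (ℝ × ℝ)) : Prop :=
  IsMonotoneGraph β ∧ ∀ β' : Set (ℝ × ℝ), β ⊆ β' → IsMonotoneGraph β' → β' = β

/-!
The points `(a, (s - a) / ε)` of the line `r + ε w = s` that are monotonically compatible with
`(x, y) ∈ β` are those with `a` between `x` and `s - ε y`. Monotonicity of `β` makes these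
intervals pairwise intersect, so (Helly's theorem on the line) some `a` lies in all of them, and
maximality puts `(a, (s - a) / ε)` into `β`. Uniqueness holds because `r + ε w` is injective on a
monotone graph.
-/

open Set

theorem exists_forall_mem_Icc_of_le {ι α : Type*} [Nonempty ι] [ConditionallyCompleteLattice α]
    {l u : ι → α} (h : ∀ i j, l i ≤ u j) : ∃ c, ∀ i, c ∈ Icc (l i) (u i) :=
  ⟨⨆ i, l i, fun i =>
    ⟨le_ciSup ⟨u i, forall_mem_range.2 fun j => h j i⟩ i, ciSup_le fun j => h j i⟩⟩

theorem mul_sub_div_nonneg_of_mem_uIcc {ε s x y a : ℝ} (hε : 0 < ε)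
    (ha : a ∈ uIcc x (s - ε * y)) : 0 ≤ (x - a) * (y - (s - a) / ε) := by
  have hy : y - (s - a) / ε = (a - (s - ε * y)) / ε := by field_simp; ring
  rw [hy, ← mul_div_assoc]
  refine div_nonneg ?_ hε.le
  rcases mem_uIcc.1 ha with ⟨hxa, has⟩ | ⟨has, hax⟩ <;> nlinarith

namespace IsMonotoneGraph

variable {β : Set (ℝ × ℝ)}

theorem injOn_fst_add_mul_snd (hβ : IsMonotoneGraph β) {ε : ℝ} (hε : 0 < ε) :
    InjOn (fun p : ℝ × ℝ => p.1 + ε * p.2) β := by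
  intro p hp q hq hpq
  dsimp only at hpq
  have hmono := hβ p hp q hq
  rw [show p.1 - q.1 = -(ε * (p.2 - q.2)) by linarith] at hmono
  have hsq : ε * (p.2 - q.2) ^ 2 ≤ 0 := by linarith
  have hsnd : p.2 = q.2 := sub_eq_zero.1 <| pow_eq_zero_iff two_ne_zero |>.1 <|
    le_antisymm (nonpos_of_mul_nonpos_right hsq hε) (sq_nonneg _)
  rw [hsnd] at hpq
  exact Prod.ext (by linarith) hsnd

theorem min_le_max_of_mem (hβ : IsMonotoneGraph β) {ε : ℝ} (hε : 0 ≤ ε) (t : ℝ) {p q : ℝ × ℝ}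
    (hp : p ∈ β) (hq : q ∈ β) : min p.1 (t - ε * p.2) ≤ max q.1 (t - ε * q.2) := by
  by_contra! h
  have hfst : q.1 < p.1 := (le_max_left _ _).trans_lt (h.trans_le (min_le_left _ _))
  have hsnd : ε * p.2 < ε * q.2 := by
    linarith [(le_max_right q.1 (t - ε * q.2)).trans_lt (h.trans_le (min_le_right _ _))]
  have := lt_of_mul_lt_mul_left hsnd hε
  nlinarith [hβ p hp q hq]

end IsMonotoneGraph

theorem IsMaximalMonotoneGraph.mem_of_forall_mul_nonneg {β : Set (ℝ × ℝ)}
    (hβ : IsMaximalMonotoneGraph β) {a b : ℝ} (h : ∀ p ∈ β, 0 ≤ (p.1 - a) * (p.2 - b)) :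
    (a, b) ∈ β := by
  have hins : IsMonotoneGraph (insert (a, b) β) := by
    rintro p (rfl | hp) q (rfl | hq)
    · simp
    · nlinarith [h q hq]
    · nlinarith [h p hp]
    · exact hβ.1 p hp q hq
  rw [← hβ.2 _ (subset_insert _ _) hins]
  exact mem_insert _ _

/-- Minty's theorem in `ℝ`: the resolvent `(I + εβ)⁻¹` of a nonempty maximal
monotone graph is everywhere defined and single valued. -/
theorem minty_resolvent (β : Set (ℝ × ℝ)) (hne : β.Nonempty)
    (hβ : IsMaximalMonotoneGraph β) :
    ∀ ε : ℝ, 0 < ε → ∀ s : ℝ,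
      ∃! rw : ℝ × ℝ, rw ∈ β ∧ rw.1 + ε * rw.2 = s := by
  intro ε hε s
  have : Nonempty β := hne.to_subtype
  obtain ⟨a, ha⟩ := exists_forall_mem_Icc_of_le
    (l := fun p : β => min p.1.1 (s - ε * p.1.2)) (u := fun p : β => max p.1.1 (s - ε * p.1.2))
    fun p q => hβ.1.min_le_max_of_mem hε.le s p.2 q.2
  have hmem : (a, (s - a) / ε) ∈ β :=
    hβ.mem_of_forall_mul_nonneg fun p hp => mul_sub_div_nonneg_of_mem_uIcc hε (ha ⟨p, hp⟩)
  have hline : a + ε * ((s - a) / ε) = s := by field_simp; ring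
  exact ⟨_, ⟨hmem, hline⟩, fun q hq =>
    hβ.1.injOn_fst_add_mul_snd hε hq.1 hmem (hq.2.trans hline.symm)⟩
end

section
/- Let β ⊆ ℝ × ℝ be a maximal monotone graph with (0, 0) ∈ β. Then there exists a nonnegative, convex, lower semicontinuous function j : ℝ → [0, +∞] with j(0) = 0 such that β is the graph of the subdifferential of j: for every (r, w) ∈ ℝ × ℝ, (r, w) ∈ β if and only if j(r) < +∞ and j(t) ≥ j(r) + w·(t − r) for all t ∈ ℝ. -/
open ENNReal

/-!
The function `j` is a primitive `j r = ∫₀ʳ β⁰` of a monotone selection `β⁰` of `β`, with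
`β⁰ = ±∞` outside the domain of `β`. As the integral of a nondecreasing function it is convex
(three-point inequality), and it is lower semicontinuous by continuity of measures from below.
If `(r, w) ∈ β`, monotonicity of `β` puts the integrand below `w` left of `r` and above `w`
right of `r`, which is the subgradient inequality at `r`. Conversely, subgradient pairs of one
function are monotonically related to each other, so a subgradient pair of `j` is related to
every point of `β` and lies in `β` by maximality.
-/

open NNReal Set MeasureTheory
open scoped Pointwise

def HasSubgradient (f : ℝ → ℝ≥0∞) (r w : ℝ) : Prop :=
  f r ≠ ⊤ ∧ ∀ t, f t ≠ ⊤ → (f r).toReal + w * (t - r) ≤ (f t).toReal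

namespace HasSubgradient

variable {f g : ℝ → ℝ≥0∞} {q r v w : ℝ}

lemma of_eq_zero (h : f r = 0) : HasSubgradient f r 0 :=
  ⟨by simp [h], fun t _ => by simp [h]⟩

lemma add (hf : HasSubgradient f r w) (hg : HasSubgradient g r v) :
    HasSubgradient (f + g) r (w + v) := by
  refine ⟨add_ne_top.2 ⟨hf.1, hg.1⟩, fun t ht => ?_⟩
  obtain ⟨hft, hgt⟩ := add_ne_top.1 ht
  simp only [Pi.add_apply, toReal_add hf.1 hg.1, toReal_add hft hgt]
  linarith [hf.2 t hft, hg.2 t hgt]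

lemma comp_neg (hf : HasSubgradient f (-r) w) : HasSubgradient (fun x => f (-x)) r (-w) :=
  ⟨hf.1, fun t ht => by linarith [hf.2 (-t) ht]⟩

lemma sub_mul_sub_nonneg (hw : HasSubgradient f r w) (hv : HasSubgradient f q v) :
    0 ≤ (r - q) * (w - v) := by
  nlinarith [hw.2 q hv.1, hv.2 r hw.1]

end HasSubgradient

lemma IsMonotoneGraph.neg {β : Set (ℝ × ℝ)} (hβ : IsMonotoneGraph β) : IsMonotoneGraph (-β) :=
  fun p hp q hq => by
    have h := hβ _ (mem_neg.1 hp) _ (mem_neg.1 hq)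
    simp only [Prod.fst_neg, Prod.snd_neg] at h
    linarith

lemma IsMaximalMonotoneGraph.mem_of_forall {β : Set (ℝ × ℝ)} (hβ : IsMaximalMonotoneGraph β)
    {p : ℝ × ℝ} (hp : ∀ q ∈ β, 0 ≤ (p.1 - q.1) * (p.2 - q.2)) : p ∈ β := by
  have hins : IsMonotoneGraph (insert p β) := by
    rintro a (rfl | ha) b (rfl | hb)
    · simp
    · exact hp b hb
    · nlinarith [hp a ha]
    · exact hβ.1 a ha b hb
  exact hβ.2 _ (subset_insert p β) hins ▸ mem_insert p β

lemma convexOn_univ_of_three_point {f : ℝ → ℝ≥0∞}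
    (h : ∀ ⦃x y z : ℝ⦄, x ≤ y → y ≤ z →
      ENNReal.ofReal (z - x) * f y ≤ ENNReal.ofReal (z - y) * f x + ENNReal.ofReal (y - x) * f z) :
    ConvexOn ℝ≥0 univ f := by
  refine LinearOrder.convexOn_of_lt convex_univ fun x _ y _ hxy a b _ _ hab => ?_
  have hab' : (a : ℝ) + b = 1 := by exact_mod_cast hab
  set m := a • x + b • y with hm
  have hym : y - m = a * (y - x) := by
    rw [hm, NNReal.smul_def, NNReal.smul_def, smul_eq_mul, smul_eq_mul]
    linear_combination (-y) * hab'
  have hmx : m - x = b * (y - x) := by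
    rw [hm, NNReal.smul_def, NNReal.smul_def, smul_eq_mul, smul_eq_mul]
    linear_combination x * hab'
  have hyx : ENNReal.ofReal (y - x) ≠ 0 := (ENNReal.ofReal_pos.2 (sub_pos.2 hxy)).ne'
  refine (ENNReal.mul_le_mul_iff_right hyx ofReal_ne_top).1 ?_
  calc ENNReal.ofReal (y - x) * f m
      ≤ ENNReal.ofReal (y - m) * f x + ENNReal.ofReal (m - x) * f y :=
        h (sub_nonneg.1 (hmx ▸ mul_nonneg b.coe_nonneg (sub_nonneg.2 hxy.le)))
          (sub_nonneg.1 (hym ▸ mul_nonneg a.coe_nonneg (sub_nonneg.2 hxy.le)))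
    _ = ENNReal.ofReal (y - x) * (a • f x + b • f y) := by
        rw [hym, hmx, ENNReal.ofReal_mul a.coe_nonneg, ENNReal.ofReal_mul b.coe_nonneg,
          ofReal_coe_nnreal, ofReal_coe_nnreal, ENNReal.smul_def, ENNReal.smul_def, smul_eq_mul,
          smul_eq_mul]
        ring

lemma ConvexOn.comp_neg {𝕜 E F : Type*} [Semiring 𝕜] [PartialOrder 𝕜] [AddCommGroup E]
    [Module 𝕜 E] [AddCommMonoid F] [PartialOrder F] [SMul 𝕜 F] {f : E → F}
    (hf : ConvexOn 𝕜 univ f) : ConvexOn 𝕜 univ fun x => f (-x) :=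
  ⟨convex_univ, fun x _ y _ a b ha hb hab => by
    simpa only [smul_neg, neg_add] using hf.2 (mem_univ (-x)) (mem_univ (-y)) ha hb hab⟩

lemma ConvexOn.apply_mul_add_mul_le {f : ℝ → ℝ≥0∞} (hf : ConvexOn ℝ≥0 univ f) (a b : ℝ) {t : ℝ}
    (ht0 : 0 ≤ t) (ht1 : t ≤ 1) :
    f (t * a + (1 - t) * b) ≤ ENNReal.ofReal t * f a + ENNReal.ofReal (1 - t) * f b := by
  have hsum : t.toNNReal + (1 - t).toNNReal = 1 := by
    rw [← Real.toNNReal_add ht0 (by linarith), add_sub_cancel, Real.toNNReal_one]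
  simpa [NNReal.smul_def, ENNReal.smul_def, Real.coe_toNNReal _ ht0,
    Real.coe_toNNReal _ (sub_nonneg.2 ht1), ENNReal.ofReal] using
    hf.2 (mem_univ a) (mem_univ b) zero_le zero_le hsum

section IcoIntegral

variable {g : ℝ → ℝ≥0∞} {a x y z : ℝ}

lemma setLIntegral_Ico_le_mul {c : ℝ≥0∞} (h : ∀ s ∈ Ico x y, g s ≤ c) :
    (∫⁻ s in Ico x y, g s) ≤ c * ENNReal.ofReal (y - x) :=
  calc (∫⁻ s in Ico x y, g s) ≤ ∫⁻ _ in Ico x y, c := setLIntegral_mono' measurableSet_Ico h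
    _ = c * ENNReal.ofReal (y - x) := by rw [setLIntegral_const, Real.volume_Ico]

lemma mul_le_setLIntegral_Ico {c : ℝ≥0∞} (h : ∀ s ∈ Ico x y, c ≤ g s) :
    c * ENNReal.ofReal (y - x) ≤ (∫⁻ s in Ico x y, g s) :=
  calc c * ENNReal.ofReal (y - x) = ∫⁻ _ in Ico x y, c := by
        rw [setLIntegral_const, Real.volume_Ico]
    _ ≤ (∫⁻ s in Ico x y, g s) := setLIntegral_mono' measurableSet_Ico h

lemma setLIntegral_Ico_add_Ico (hxy : x ≤ y) (hyz : y ≤ z) :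
    (∫⁻ s in Ico x z, g s) = (∫⁻ s in Ico x y, g s) + (∫⁻ s in Ico y z, g s) := by
  rw [← Ico_union_Ico_eq_Ico hxy hyz, lintegral_union measurableSet_Ico Ico_disjoint_Ico_same]

lemma setLIntegral_Ico_le_add_Ico (g : ℝ → ℝ≥0∞) (x y z : ℝ) :
    (∫⁻ s in Ico x z, g s) ≤ (∫⁻ s in Ico x y, g s) + (∫⁻ s in Ico y z, g s) :=
  (lintegral_mono_set Ico_subset_Ico_union_Ico).trans (lintegral_union_le _ _ _)

lemma setLIntegral_Ico_three_point (hg : Monotone g) (a : ℝ) (hxy : x ≤ y) (hyz : y ≤ z) :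
    ENNReal.ofReal (z - x) * (∫⁻ s in Ico a y, g s) ≤
      ENNReal.ofReal (z - y) * (∫⁻ s in Ico a x, g s) +
        ENNReal.ofReal (y - x) * (∫⁻ s in Ico a z, g s) := by
  rcases lt_or_ge y a with hya | hay
  · simp [Ico_eq_empty_of_le hya.le]
  set A := ∫⁻ s in Ico x y, g s
  set B := ∫⁻ s in Ico y z, g s
  have hFy : (∫⁻ s in Ico a y, g s) ≤ (∫⁻ s in Ico a x, g s) + A :=
    setLIntegral_Ico_le_add_Ico g a x y
  have hFz : (∫⁻ s in Ico a z, g s) = (∫⁻ s in Ico a y, g s) + B :=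
    setLIntegral_Ico_add_Ico hay hyz
  -- both increments compare with the value `g y` at the middle point
  have hAB : ENNReal.ofReal (z - y) * A ≤ ENNReal.ofReal (y - x) * B :=
    calc ENNReal.ofReal (z - y) * A
        ≤ ENNReal.ofReal (z - y) * (g y * ENNReal.ofReal (y - x)) :=
          mul_le_mul_right (setLIntegral_Ico_le_mul fun s hs => hg hs.2.le) _
      _ = ENNReal.ofReal (y - x) * (g y * ENNReal.ofReal (z - y)) := by ring
      _ ≤ ENNReal.ofReal (y - x) * B :=
          mul_le_mul_right (mul_le_setLIntegral_Ico fun s hs => hg hs.1) _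
  rw [show z - x = (z - y) + (y - x) by ring, ENNReal.ofReal_add (by linarith) (by linarith),
    hFz, add_mul]
  calc ENNReal.ofReal (z - y) * (∫⁻ s in Ico a y, g s) +
        ENNReal.ofReal (y - x) * (∫⁻ s in Ico a y, g s)
      ≤ ENNReal.ofReal (z - y) * ((∫⁻ s in Ico a x, g s) + A) +
          ENNReal.ofReal (y - x) * (∫⁻ s in Ico a y, g s) := by gcongr
    _ ≤ ENNReal.ofReal (z - y) * (∫⁻ s in Ico a x, g s) + ENNReal.ofReal (y - x) * B +
          ENNReal.ofReal (y - x) * (∫⁻ s in Ico a y, g s) := by rw [mul_add]; gcongr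
    _ = _ := by ring

lemma convexOn_setLIntegral_Ico (hg : Monotone g) (a : ℝ) :
    ConvexOn ℝ≥0 univ fun r => ∫⁻ s in Ico a r, g s :=
  convexOn_univ_of_three_point fun _ _ _ => setLIntegral_Ico_three_point hg a

lemma lowerSemicontinuous_setLIntegral_Ico (g : ℝ → ℝ≥0∞) (a : ℝ) :
    LowerSemicontinuous fun r => ∫⁻ s in Ico a r, g s := by
  intro x c hc
  dsimp only at hc
  have hunion : ⋃ n : ℕ, Ico a (x - 1 / (n + 1)) = Ico a x := by
    ext s
    simp only [mem_iUnion, mem_Ico]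
    constructor
    · rintro ⟨n, has, hsx⟩
      exact ⟨has, hsx.trans_le (sub_le_self _ Nat.one_div_pos_of_nat.le)⟩
    · rintro ⟨has, hsx⟩
      obtain ⟨n, hn⟩ := exists_nat_one_div_lt (sub_pos.2 hsx)
      exact ⟨n, has, by linarith⟩
  have hmono : Monotone fun n : ℕ => Ico a (x - 1 / (n + 1)) := fun m n hmn =>
    Ico_subset_Ico_right (by linarith [Nat.one_div_le_one_div (α := ℝ) hmn])
  rw [← hunion, ← withDensity_apply _ (MeasurableSet.iUnion fun _ => measurableSet_Ico),
    hmono.measure_iUnion] at hc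
  obtain ⟨n, hn⟩ := lt_iSup_iff.1 hc
  rw [withDensity_apply _ measurableSet_Ico] at hn
  filter_upwards [Ioi_mem_nhds (sub_lt_self x Nat.one_div_pos_of_nat)] with y hy
  exact hn.trans_le (lintegral_mono_set (Ico_subset_Ico_right (le_of_lt hy)))

lemma hasSubgradient_setLIntegral_Ico {r : ℝ} {c : ℝ≥0} (har : a ≤ r)
    (hlt : ∀ s < r, g s ≤ c) (hge : ∀ s, r ≤ s → c ≤ g s) :
    HasSubgradient (fun t => ∫⁻ s in Ico a t, g s) r c := by
  have hr : (∫⁻ s in Ico a r, g s) ≠ ⊤ :=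
    ne_top_of_le_ne_top (mul_ne_top coe_ne_top ofReal_ne_top)
      (setLIntegral_Ico_le_mul fun s hs => hlt s hs.2)
  refine ⟨hr, fun t ht => ?_⟩
  dsimp only at ht ⊢
  rcases le_total r t with hrt | htr
  · have hsplit := setLIntegral_Ico_add_Ico (g := g) har hrt
    have hB : (∫⁻ s in Ico r t, g s) ≠ ⊤ := fun h => ht (by rw [hsplit, h, add_top])
    have hlow : (c : ℝ) * (t - r) ≤ (∫⁻ s in Ico r t, g s).toReal := by
      simpa [toReal_ofReal (sub_nonneg.2 hrt)] using
        toReal_mono hB (mul_le_setLIntegral_Ico fun s hs => hge s hs.1)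
    rw [hsplit, toReal_add hr hB]
    linarith
  · have hup : (∫⁻ s in Ico a r, g s) ≤ (∫⁻ s in Ico a t, g s) + c * ENNReal.ofReal (r - t) :=
      (setLIntegral_Ico_le_add_Ico g a t r).trans
        (add_le_add le_rfl (setLIntegral_Ico_le_mul fun s hs => hlt s hs.2))
    have hupR := toReal_mono (add_ne_top.2 ⟨ht, mul_ne_top coe_ne_top ofReal_ne_top⟩) hup
    rw [toReal_add ht (mul_ne_top coe_ne_top ofReal_ne_top)] at hupR
    simp only [toReal_mul, coe_toReal, toReal_ofReal (sub_nonneg.2 htr)] at hupR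
    linarith

end IcoIntegral

/-- For maximal `β` this is the positive part of the largest element of `β(x)`, and `⊤` right of
the domain of `β`. -/
noncomputable def supSlope (β : Set (ℝ × ℝ)) (x : ℝ) : ℝ≥0∞ :=
  ⨆ p ∈ β, ⨆ _ : p.1 ≤ x, ENNReal.ofReal p.2

noncomputable def halfPrimitive (β : Set (ℝ × ℝ)) (r : ℝ) : ℝ≥0∞ :=
  ∫⁻ s in Ico 0 r, supSlope β s

/-- `halfPrimitive β` vanishes on `(-∞, 0]`; the negative half-line is handled by the reflected
graph `-β`. -/
noncomputable def primitive (β : Set (ℝ × ℝ)) (r : ℝ) : ℝ≥0∞ :=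
  halfPrimitive β r + halfPrimitive (-β) (-r)

section Primitive

variable {β : Set (ℝ × ℝ)} {r w s : ℝ}

lemma monotone_supSlope (β : Set (ℝ × ℝ)) : Monotone (supSlope β) := fun _ _ hxy =>
  iSup₂_mono fun _ _ => iSup_le fun hp => le_iSup_of_le (hp.trans hxy) le_rfl

lemma supSlope_le (hβ : IsMonotoneGraph β) (hrw : (r, w) ∈ β) (hs : s < r) :
    supSlope β s ≤ ENNReal.ofReal w :=
  iSup₂_le fun p hp => iSup_le fun hps =>
    ENNReal.ofReal_le_ofReal (by nlinarith [hβ p hp (r, w) hrw])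

lemma le_supSlope (hrw : (r, w) ∈ β) (hs : r ≤ s) : ENNReal.ofReal w ≤ supSlope β s :=
  le_iSup₂_of_le (r, w) hrw (le_iSup_of_le hs le_rfl)

lemma hasSubgradient_halfPrimitive (hβ : IsMonotoneGraph β) (h0 : (0, 0) ∈ β)
    (hrw : (r, w) ∈ β) : HasSubgradient (halfPrimitive β) r w.toNNReal := by
  rcases le_or_gt 0 r with hr | hr
  · exact hasSubgradient_setLIntegral_Ico hr (fun _ => supSlope_le hβ hrw) (fun _ => le_supSlope hrw)
  · have hw : w ≤ 0 := by nlinarith [hβ (r, w) hrw (0, 0) h0]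
    rw [Real.toNNReal_of_nonpos hw, NNReal.coe_zero]
    exact .of_eq_zero (by simp [halfPrimitive, Ico_eq_empty_of_le hr.le])

lemma hasSubgradient_primitive (hβ : IsMonotoneGraph β) (h0 : (0, 0) ∈ β)
    (hrw : (r, w) ∈ β) : HasSubgradient (primitive β) r w := by
  have hneg := hasSubgradient_halfPrimitive (r := -r) (w := -w) hβ.neg (by simpa using h0)
    (by simpa using hrw)
  have hsum := (hasSubgradient_halfPrimitive hβ h0 hrw).add hneg.comp_neg
  rwa [Real.coe_toNNReal', Real.coe_toNNReal', ← sub_eq_add_neg,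
    max_zero_sub_max_neg_zero_eq_self] at hsum

lemma convexOn_primitive (β : Set (ℝ × ℝ)) : ConvexOn ℝ≥0 univ (primitive β) :=
  (convexOn_setLIntegral_Ico (monotone_supSlope β) 0).add
    (convexOn_setLIntegral_Ico (monotone_supSlope (-β)) 0).comp_neg

lemma lowerSemicontinuous_primitive (β : Set (ℝ × ℝ)) : LowerSemicontinuous (primitive β) :=
  (lowerSemicontinuous_setLIntegral_Ico _ 0).add
    ((lowerSemicontinuous_setLIntegral_Ico _ 0).comp continuous_neg)

lemma primitive_zero (β : Set (ℝ × ℝ)) : primitive β 0 = 0 := by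
  simp [primitive, halfPrimitive]

end Primitive

/-- Every maximal monotone graph `β` in `ℝ × ℝ` with `(0,0) ∈ β` is the graph of
the subdifferential of a nonnegative, convex, l.s.c. function `j` with `j 0 = 0`:
`(r, w) ∈ β` iff `j r < ∞` and `j t ≥ j r + w (t - r)` for all `t`
(the latter inequality being automatic at points where `j t = ∞`). -/
theorem maximal_monotone_graph_eq_subdifferential
    (β : Set (ℝ × ℝ)) (hβ : IsMaximalMonotoneGraph β) (h0 : (0, 0) ∈ β) :
    ∃ j : ℝ → ℝ≥0∞,
      (∀ a b t : ℝ, 0 ≤ t → t ≤ 1 →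
        j (t * a + (1 - t) * b) ≤ ENNReal.ofReal t * j a + ENNReal.ofReal (1 - t) * j b) ∧
      LowerSemicontinuous j ∧
      j 0 = 0 ∧
      ∀ r w : ℝ, (r, w) ∈ β ↔
        (j r ≠ ⊤ ∧ ∀ t : ℝ, j t ≠ ⊤ → (j r).toReal + w * (t - r) ≤ (j t).toReal) := by
  refine ⟨primitive β, fun a b t ht0 ht1 => (convexOn_primitive β).apply_mul_add_mul_le a b ht0 ht1,
    lowerSemicontinuous_primitive β, primitive_zero β, fun r w => ⟨?_, fun hsub => ?_⟩⟩
  · exact hasSubgradient_primitive hβ.1 h0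
  · exact hβ.mem_of_forall fun q hq => HasSubgradient.sub_mul_sub_nonneg hsub
      (hasSubgradient_primitive hβ.1 h0 hq)
end
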